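/- arXiv:2601.09704 — 9 statements merged into one kernel-verified Lean document; each statement's English description precedes it below -/
import Mathlib

section
/- Let p be a prime and n ≥ 1, and let M, M' ∈ Sym_n(ℤ_p) be nonsingular. Then the paired cokernels (Cok(M),⟨·,·⟩) and (Cok(M'),⟨·,·⟩) are isomorphic if and only if there exists a nonsingular M'' ∈ Sym_n(ℤ_p) such that M'' is congruent to M' and every entry of M⁻¹ − (M'')⁻¹ lies in ℤ_p (i.e. M⁻¹ − (M'')⁻¹ ∈ Sym_n(ℤ_p), the inverses being taken over ℚ_p). -/
open Matrix MeasureTheory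

/-- Congruence of square matrices over `R`: `B = U * A * Uᵀ` for some `U ∈ GL`. -/
def Matrix.Congruent {R : Type*} [CommRing R] {ι : Type*} [Fintype ι] [DecidableEq ι]
    (A B : Matrix ι ι R) : Prop :=
  ∃ U : (Matrix ι ι R)ˣ, (U : Matrix ι ι R) * A * (U : Matrix ι ι R)ᵀ = B

/-- Congruence of square matrices indexed by two (necessarily equipotent) index types. -/
def Matrix.CongruentTo {R : Type*} [CommRing R] {ι κ : Type*} [Fintype ι] [DecidableEq ι]
    [Fintype κ] [DecidableEq κ] (A : Matrix ι ι R) (B : Matrix κ κ R) : Prop :=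
  ∃ e : ι ≃ κ, (A.submatrix e.symm e.symm).Congruent B

/-- The cokernel `R^ι / M R^ι` of a square matrix `M`. -/
abbrev Matrix.Cok {R : Type*} [CommRing R] {ι : Type*} [Fintype ι] (M : Matrix ι ι R) :=
  (ι → R) ⧸ LinearMap.range M.mulVecLin

/-- The pairing value `Xᵀ M⁻¹ Y ∈ ℚ_p`, the inverse being taken over `ℚ_p`. -/
noncomputable def pairVal {p : ℕ} [Fact p.Prime] {ι : Type*} [Fintype ι] [DecidableEq ι]
    (M : Matrix ι ι ℤ_[p]) (X Y : ι → ℤ_[p]) : ℚ_[p] :=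
  (fun i => (X i : ℚ_[p])) ⬝ᵥ ((M.map (fun a => (a : ℚ_[p])))⁻¹).mulVec (fun i => (Y i : ℚ_[p]))

/-- Isomorphism of cokernels together with their symmetric pairings: a group isomorphism
`Cok M ≃ Cok M'` such that for any lifts, the pairing values agree modulo `ℤ_p`. -/
def PairedIso {p : ℕ} [Fact p.Prime] {ι κ : Type*} [Fintype ι] [DecidableEq ι] [Fintype κ]
    [DecidableEq κ] (M : Matrix ι ι ℤ_[p]) (M' : Matrix κ κ ℤ_[p]) : Prop :=
  ∃ e : M.Cok ≃+ M'.Cok,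
    ∀ (X Y : ι → ℤ_[p]) (X' Y' : κ → ℤ_[p]),
      e (Submodule.Quotient.mk X) = Submodule.Quotient.mk X' →
      e (Submodule.Quotient.mk Y) = Submodule.Quotient.mk Y' →
      ‖pairVal M X Y - pairVal M' X' Y'‖ ≤ 1

/-!
An isomorphism of paired cokernels is automatically `ℤ_p`-linear, since both groups are
killed by a power of `p`. Over the local ring `ℤ_p` it therefore lifts to some
`U ∈ GL_n(ℤ_p)`: any lift `V` satisfies `range V + range M' = ℤ_p^n`, and a residue-field
argument makes `V + M' C` invertible for a suitable `C`. With `M'' = U⁻¹ M' U⁻ᵀ`, the pairing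
of `M'` on `U X, U Y` is `Xᵀ M''⁻¹ Y`, so compatibility of the pairings on basis vectors says
exactly that `M⁻¹ - M''⁻¹` is integral.

Conversely, if `A = M⁻¹ - M''⁻¹` is integral then `M = M'' (1 - A M)` and
`M'' = M (1 + A M'')`, so `M` and `M''` have the same column span, and a congruence
`U M'' Uᵀ = M'` induces `Cok M ≃ Cok M'`, `x ↦ U x`. The two pairings then differ by
`Xᵀ A Y ∈ ℤ_p`, and changing lifts only adds elements of `ℤ_p` because `M'` is symmetric.
-/

theorem exists_le_isCompl_of_sup_eq_top {α : Type*} [Lattice α] [BoundedOrder α]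
    [IsModularLattice α] [ComplementedLattice α] {a b : α} (h : a ⊔ b = ⊤) :
    ∃ c ≤ b, IsCompl a c := by
  have : ComplementedLattice (Set.Iic b) := IsModularLattice.complementedLattice_Iic
  obtain ⟨⟨c, hcb⟩, hc⟩ := exists_isCompl (⟨a ⊓ b, inf_le_right⟩ : Set.Iic b)
  have hinf : a ⊓ b ⊓ c = ⊥ := congrArg Subtype.val hc.inf_eq_bot
  have hsup : a ⊓ b ⊔ c = b := congrArg Subtype.val hc.sup_eq_top
  refine ⟨c, hcb, ⟨disjoint_iff.2 ?_, codisjoint_iff.2 ?_⟩⟩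
  · rwa [inf_assoc, inf_eq_right.2 hcb] at hinf
  · rw [← h, ← hsup, ← sup_assoc, sup_inf_self]

theorem LinearMap.exists_injective_add_comp {K V W : Type*} [Field K] [AddCommGroup V]
    [Module K V] [FiniteDimensional K V] [AddCommGroup W] [Module K W] (f : V →ₗ[K] V)
    (g : W →ₗ[K] V) (h : range f ⊔ range g = ⊤) :
    ∃ k : V →ₗ[K] W, Function.Injective (f + g ∘ₗ k) := by
  -- `k` will map `ker f` isomorphically onto a complement `c` of `range f` inside `range g`.
  obtain ⟨c, hcg, hc⟩ := exists_le_isCompl_of_sup_eq_top h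
  have hdim : Module.finrank K (ker f) = Module.finrank K c := by
    have := f.finrank_range_add_finrank_ker
    have := Submodule.finrank_add_eq_of_isCompl hc
    omega
  obtain ⟨φ⟩ := FiniteDimensional.nonempty_linearEquiv_of_finrank_eq hdim
  obtain ⟨ψ, hψ⟩ := LinearMap.exists_extend (φ : ker f →ₗ[K] c)
  obtain ⟨k, hk⟩ := Module.projective_lifting_property g.rangeRestrict
    (Submodule.inclusion hcg ∘ₗ ψ) g.surjective_rangeRestrict
  have hgk (x : V) : g (k x) = ψ x := congrArg Subtype.val (LinearMap.congr_fun hk x)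
  refine ⟨k, (injective_iff_map_eq_zero _).2 fun x hx => ?_⟩
  rw [add_apply, comp_apply, hgk, add_eq_zero_iff_eq_neg] at hx
  have hfx : f x = 0 :=
    Submodule.disjoint_def.1 hc.disjoint _ (mem_range_self f x) (hx ▸ neg_mem (ψ x).2)
  have hψx : ψ x = 0 := by simpa [hfx] using hx
  have : φ ⟨x, mem_ker.2 hfx⟩ = 0 := (LinearMap.congr_fun hψ _).symm.trans hψx
  simpa using congrArg Subtype.val (φ.map_eq_zero_iff.1 this)

namespace Matrix

variable {R ι : Type*} [CommRing R] [Fintype ι]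

theorem IsSymm.mul_mul_transpose {A : Matrix ι ι R} (hA : A.IsSymm) (P : Matrix ι ι R) :
    (P * A * Pᵀ).IsSymm := by
  simp [IsSymm, transpose_mul, hA.eq, Matrix.mul_assoc]

variable [DecidableEq ι]

theorem exists_det_add_mul_ne_zero {K : Type*} [Field K] (A B : Matrix ι ι K)
    (h : LinearMap.range A.mulVecLin ⊔ LinearMap.range B.mulVecLin = ⊤) :
    ∃ C : Matrix ι ι K, (A + B * C).det ≠ 0 := by
  obtain ⟨k, hk⟩ := A.mulVecLin.exists_injective_add_comp B.mulVecLin h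
  refine ⟨LinearMap.toMatrix' k, fun hdet => ?_⟩
  obtain ⟨v, hv, hv0⟩ := exists_mulVec_eq_zero_iff.2 hdet
  refine hv (hk ?_)
  simpa [add_mulVec, ← mulVec_mulVec, ← toLin'_apply] using hv0

theorem exists_isUnit_det_add_mul [IsLocalRing R] (A B : Matrix ι ι R)
    (h : LinearMap.range A.mulVecLin ⊔ LinearMap.range B.mulVecLin = ⊤) :
    ∃ C : Matrix ι ι R, IsUnit (A + B * C).det := by
  set res := IsLocalRing.residue R
  have hres : Function.Surjective res := IsLocalRing.residue_surjective
  have hsup :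
      LinearMap.range (A.map res).mulVecLin ⊔ LinearMap.range (B.map res).mulVecLin = ⊤ := by
    refine eq_top_iff.2 fun y _ => ?_
    obtain ⟨y₀, rfl⟩ := hres.comp_left y
    obtain ⟨_, ⟨x, rfl⟩, _, ⟨z, rfl⟩, hxz⟩ :=
      Submodule.mem_sup.1 (h ▸ Submodule.mem_top (x := y₀))
    refine Submodule.mem_sup.2
      ⟨_, ⟨res ∘ x, rfl⟩, _, ⟨res ∘ z, rfl⟩, funext fun i => ?_⟩
    simp [← RingHom.map_mulVec, ← hxz]
  obtain ⟨c, hc⟩ := exists_det_add_mul_ne_zero _ _ hsup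
  refine ⟨c.map (Function.surjInv hres), (IsLocalRing.residue_ne_zero_iff_isUnit _).1 ?_⟩
  have hlift : (c.map (Function.surjInv hres)).map res = c := by
    ext; simp [Function.surjInv_eq hres]
  rwa [RingHom.map_det, map_add, map_mul, RingHom.mapMatrix_apply, RingHom.mapMatrix_apply,
    RingHom.mapMatrix_apply, hlift]

theorem det_smul_cok (M : Matrix ι ι R) (x : M.Cok) : M.det • x = 0 := by
  obtain ⟨X, rfl⟩ := Submodule.Quotient.mk_surjective _ x
  rw [← Submodule.Quotient.mk_smul, Submodule.Quotient.mk_eq_zero]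
  exact ⟨M.adjugate *ᵥ X, by simp [mulVec_mulVec, mul_adjugate, smul_mulVec]⟩

theorem exists_mulVec_lift {κ : Type*} [Fintype κ] {M : Matrix ι ι R} {M' : Matrix κ κ R}
    (e : M.Cok →ₗ[R] M'.Cok) :
    ∃ V : Matrix κ ι R, ∀ x,
      Submodule.Quotient.mk (V *ᵥ x) = e (Submodule.Quotient.mk x) := by
  obtain ⟨ℓ, hℓ⟩ := Module.projective_lifting_property (LinearMap.range M'.mulVecLin).mkQ
    (e ∘ₗ (LinearMap.range M.mulVecLin).mkQ) (Submodule.mkQ_surjective _)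
  refine ⟨LinearMap.toMatrix' ℓ, fun x => ?_⟩
  rw [← toLin'_apply, toLin'_toMatrix']
  exact LinearMap.congr_fun hℓ x

theorem exists_units_mulVec_lift [IsLocalRing R] {M M' : Matrix ι ι R}
    (e : M.Cok ≃ₗ[R] M'.Cok) :
    ∃ U : (Matrix ι ι R)ˣ, ∀ x,
      e (Submodule.Quotient.mk x) = Submodule.Quotient.mk (↑U *ᵥ x) := by
  obtain ⟨V, hV⟩ := exists_mulVec_lift (e : M.Cok →ₗ[R] M'.Cok)
  simp only [LinearEquiv.coe_coe] at hV
  have hsup : LinearMap.range V.mulVecLin ⊔ LinearMap.range M'.mulVecLin = ⊤ := by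
    refine eq_top_iff.2 fun y _ => ?_
    obtain ⟨x, hx⟩ := Submodule.Quotient.mk_surjective _ (e.symm (Submodule.Quotient.mk y))
    have : Submodule.Quotient.mk (V *ᵥ x) = (Submodule.Quotient.mk y : M'.Cok) := by
      rw [hV, hx, LinearEquiv.apply_symm_apply]
    obtain ⟨z, hz⟩ := (Submodule.Quotient.eq _).1 this
    rw [mulVecLin_apply] at hz
    exact Submodule.mem_sup.2 ⟨_, ⟨x, rfl⟩, _, ⟨-z, rfl⟩, by simp [mulVec_neg, hz]⟩
  obtain ⟨C, hC⟩ := exists_isUnit_det_add_mul V M' hsup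
  refine ⟨((isUnit_iff_isUnit_det _).2 hC).unit, fun x => ?_⟩
  rw [IsUnit.unit_spec, ← hV, Submodule.Quotient.eq]
  exact ⟨-(C *ᵥ x), by simp [add_mulVec, mulVec_neg, mulVec_mulVec]⟩

theorem units_conj_inv_conj (U : (Matrix ι ι R)ˣ) (A : Matrix ι ι R) :
    (U : Matrix ι ι R) * ((↑U⁻¹ : Matrix ι ι R) * A * (↑U⁻¹ : Matrix ι ι R)ᵀ) *
      (U : Matrix ι ι R)ᵀ = A := by
  rw [← Matrix.mul_assoc, ← Matrix.mul_assoc, U.mul_inv, Matrix.one_mul, Matrix.mul_assoc,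
    ← transpose_mul, U.mul_inv, transpose_one, Matrix.mul_one]

theorem map_range_mulVecLin_units (U : (Matrix ι ι R)ˣ) (M : Matrix ι ι R) :
    (LinearMap.range M.mulVecLin).map (U : Matrix ι ι R).mulVecLin =
      LinearMap.range ((U : Matrix ι ι R) * M * (U : Matrix ι ι R)ᵀ).mulVecLin := by
  have hT : LinearMap.range (U : Matrix ι ι R)ᵀ.mulVecLin = ⊤ :=
    LinearMap.range_eq_top.2 (mulVec_surjective_iff_isUnit.2 ((isUnit_transpose _).2 U.isUnit))
  rw [mulVecLin_mul, LinearMap.range_comp_of_range_eq_top _ hT, mulVecLin_mul,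
    LinearMap.range_comp]

end Matrix

section Padic

open PadicInt

theorem PadicInt.exists_map_coe_eq {p : ℕ} [Fact p.Prime] {ι : Type*} {A : Matrix ι ι ℚ_[p]}
    (h : ∀ i j, ‖A i j‖ ≤ 1) : ∃ A₀ : Matrix ι ι ℤ_[p], A₀.map Coe.ringHom = A :=
  ⟨of fun i j => ⟨A i j, h i j⟩, rfl⟩

theorem AddMonoidHom.map_smul_of_pow_smul_eq_zero {p : ℕ} [Fact p.Prime] {A B : Type*}
    [AddCommGroup A] [Module ℤ_[p] A] [AddCommGroup B] [Module ℤ_[p] B] (f : A →+ B) {N : ℕ}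
    (hB : ∀ y : B, (p : ℤ_[p]) ^ N • y = 0) (a : ℤ_[p]) (x : A) :
    f (a • x) = a • f x := by
  obtain ⟨b, hb⟩ := Ideal.mem_span_singleton'.1 (PadicInt.appr_spec N a)
  have ha : a = (a.appr N : ℤ_[p]) + ((p ^ N : ℕ) : ℤ_[p]) * b := by
    push_cast
    linear_combination -hb
  have hnat (m : ℕ) (y : A) : f ((m : ℤ_[p]) • y) = (m : ℤ_[p]) • f y := by
    simp only [Nat.cast_smul_eq_nsmul, map_nsmul]
  rw [ha, add_smul, add_smul, mul_smul, mul_smul, map_add, hnat, hnat, Nat.cast_pow, hB, hB]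

variable {p : ℕ} [Fact p.Prime] {ι : Type*} [Fintype ι]

theorem PadicInt.coe_comp_mulVec (A : Matrix ι ι ℤ_[p]) (X : ι → ℤ_[p]) :
    Coe.ringHom ∘ (A *ᵥ X) = A.map Coe.ringHom *ᵥ (Coe.ringHom ∘ X) :=
  funext (RingHom.map_mulVec _ A X)

variable [DecidableEq ι]

theorem PadicInt.isUnit_det_map_coe {M : Matrix ι ι ℤ_[p]} (hd : M.det ≠ 0) :
    IsUnit (M.map Coe.ringHom).det := by
  rw [← RingHom.mapMatrix_apply, ← RingHom.map_det, isUnit_iff_ne_zero]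
  exact (map_ne_zero_iff _ Subtype.val_injective).2 hd

theorem Matrix.pow_valuation_det_smul_cok {M : Matrix ι ι ℤ_[p]} (hd : M.det ≠ 0)
    (x : M.Cok) : (p : ℤ_[p]) ^ M.det.valuation • x = 0 := by
  have : (p : ℤ_[p]) ^ M.det.valuation = ↑(PadicInt.unitCoeff hd)⁻¹ * M.det :=
    (Units.eq_inv_mul_iff_mul_eq _).2 (PadicInt.unitCoeff_spec hd).symm
  rw [this, mul_smul, M.det_smul_cok, smul_zero]

theorem pairVal_eq (M : Matrix ι ι ℤ_[p]) (X Y : ι → ℤ_[p]) :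
    pairVal M X Y = (Coe.ringHom ∘ X) ⬝ᵥ (M.map Coe.ringHom)⁻¹ *ᵥ (Coe.ringHom ∘ Y) :=
  rfl

theorem pairVal_add_left (M : Matrix ι ι ℤ_[p]) (X X' Y : ι → ℤ_[p]) :
    pairVal M (X + X') Y = pairVal M X Y + pairVal M X' Y := by
  rw [pairVal, pairVal, pairVal, ← add_dotProduct]
  rfl

theorem pairVal_add_right (M : Matrix ι ι ℤ_[p]) (X Y Y' : ι → ℤ_[p]) :
    pairVal M X (Y + Y') = pairVal M X Y + pairVal M X Y' := by
  rw [pairVal, pairVal, pairVal, ← dotProduct_add, ← mulVec_add]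
  rfl

theorem pairVal_mulVec_left {M : Matrix ι ι ℤ_[p]} (hs : M.IsSymm) (hd : M.det ≠ 0)
    (Z Y : ι → ℤ_[p]) : pairVal M (M *ᵥ Z) Y = ((Z ⬝ᵥ Y : ℤ_[p]) : ℚ_[p]) := by
  have hsq : (M.map Coe.ringHom)ᵀ = M.map Coe.ringHom := (hs.map _).eq
  rw [pairVal_eq, coe_comp_mulVec, ← vecMul_transpose, ← dotProduct_mulVec, mulVec_mulVec, hsq,
    mul_nonsing_inv _ (isUnit_det_map_coe hd), one_mulVec, ← RingHom.map_dotProduct]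
  rfl

theorem pairVal_mulVec_right {M : Matrix ι ι ℤ_[p]} (hd : M.det ≠ 0) (X W : ι → ℤ_[p]) :
    pairVal M X (M *ᵥ W) = ((X ⬝ᵥ W : ℤ_[p]) : ℚ_[p]) := by
  rw [pairVal_eq, coe_comp_mulVec, mulVec_mulVec, nonsing_inv_mul _ (isUnit_det_map_coe hd),
    one_mulVec, ← RingHom.map_dotProduct]
  rfl

theorem norm_pairVal_sub_le_one_of_mk_eq {M : Matrix ι ι ℤ_[p]} (hs : M.IsSymm)
    (hd : M.det ≠ 0) {X X' Y Y' : ι → ℤ_[p]}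
    (hX : (Submodule.Quotient.mk X : M.Cok) = Submodule.Quotient.mk X')
    (hY : (Submodule.Quotient.mk Y : M.Cok) = Submodule.Quotient.mk Y') :
    ‖pairVal M X Y - pairVal M X' Y'‖ ≤ 1 := by
  obtain ⟨Z, hZ⟩ := (Submodule.Quotient.eq _).1 hX
  obtain ⟨W, hW⟩ := (Submodule.Quotient.eq _).1 hY
  rw [mulVecLin_apply, eq_sub_iff_add_eq] at hZ hW
  have : pairVal M X Y - pairVal M X' Y'
      = ((Z ⬝ᵥ (M *ᵥ W) + Z ⬝ᵥ Y' + X' ⬝ᵥ W : ℤ_[p]) : ℚ_[p]) := by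
    rw [← hZ, ← hW, pairVal_add_left, pairVal_add_right, pairVal_add_right,
      pairVal_mulVec_left hs hd, pairVal_mulVec_left hs hd, pairVal_mulVec_right hd]
    push_cast
    ring
  rw [this]
  exact PadicInt.norm_le_one _

theorem pairVal_conj (U : (Matrix ι ι ℤ_[p])ˣ) (M : Matrix ι ι ℤ_[p]) (X Y : ι → ℤ_[p]) :
    pairVal ((U : Matrix ι ι ℤ_[p]) * M * (U : Matrix ι ι ℤ_[p])ᵀ) (↑U *ᵥ X) (↑U *ᵥ Y) =
      pairVal M X Y := by
  set Uq := (U : Matrix ι ι ℤ_[p]).map Coe.ringHom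
  have hU : IsUnit Uq.det := (isUnit_iff_isUnit_det _).1 (U.isUnit.map (Coe.ringHom.mapMatrix))
  have hUT : IsUnit Uqᵀ.det := by rwa [det_transpose]
  rw [pairVal_eq, pairVal_eq, coe_comp_mulVec, coe_comp_mulVec, Matrix.map_mul, Matrix.map_mul,
    transpose_map, Matrix.mul_inv_rev, Matrix.mul_inv_rev, ← vecMul_transpose,
    ← dotProduct_mulVec, mulVec_mulVec, mulVec_mulVec, ← Matrix.mul_assoc, ← Matrix.mul_assoc,
    mul_nonsing_inv _ hUT, Matrix.one_mul, Matrix.mul_assoc, nonsing_inv_mul _ hU, Matrix.mul_one]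

theorem pairVal_single (M : Matrix ι ι ℤ_[p]) (i j : ι) :
    pairVal M (Pi.single i 1) (Pi.single j 1) = (M.map Coe.ringHom)⁻¹ i j := by
  simp [pairVal_eq, Pi.single_apply, dotProduct, mulVec]

theorem forall_norm_pairVal_sub_le_one_iff (M M'' : Matrix ι ι ℤ_[p]) :
    (∀ X Y, ‖pairVal M X Y - pairVal M'' X Y‖ ≤ 1) ↔
      ∀ i j, ‖((M.map Coe.ringHom)⁻¹ - (M''.map Coe.ringHom)⁻¹) i j‖ ≤ 1 := by
  refine ⟨fun h i j => ?_, fun h X Y => ?_⟩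
  · simpa [pairVal_single] using h (Pi.single i 1) (Pi.single j 1)
  · obtain ⟨A, hA⟩ := exists_map_coe_eq h
    have : pairVal M X Y - pairVal M'' X Y = ((X ⬝ᵥ A *ᵥ Y : ℤ_[p]) : ℚ_[p]) := by
      rw [pairVal_eq, pairVal_eq, ← dotProduct_sub, ← sub_mulVec, ← hA, ← coe_comp_mulVec,
        ← RingHom.map_dotProduct]
      rfl
    rw [this]
    exact PadicInt.norm_le_one _

theorem range_mulVecLin_eq_of_norm_inv_sub_inv_le_one {M M'' : Matrix ι ι ℤ_[p]}
    (hM : M.det ≠ 0) (hM'' : M''.det ≠ 0)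
    (h : ∀ i j, ‖((M.map Coe.ringHom)⁻¹ - (M''.map Coe.ringHom)⁻¹) i j‖ ≤ 1) :
    LinearMap.range M.mulVecLin = LinearMap.range M''.mulVecLin := by
  obtain ⟨A, hA⟩ := exists_map_coe_eq h
  have hinj : Function.Injective (fun N : Matrix ι ι ℤ_[p] => N.map Coe.ringHom) :=
    map_injective Subtype.val_injective
  have hMq := isUnit_det_map_coe hM
  have hM''q := isUnit_det_map_coe hM''
  have h₁ : M = M'' * (1 - A * M) := hinj <| by
    simp only [← RingHom.mapMatrix_apply, map_mul, map_sub, map_one]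
    simp only [RingHom.mapMatrix_apply]
    rw [hA, sub_mul, nonsing_inv_mul _ hMq, sub_sub_cancel, ← Matrix.mul_assoc,
      mul_nonsing_inv _ hM''q, Matrix.one_mul]
  have h₂ : M'' = M * (1 + A * M'') := hinj <| by
    simp only [← RingHom.mapMatrix_apply, map_mul, map_add, map_one]
    simp only [RingHom.mapMatrix_apply]
    rw [hA, sub_mul, nonsing_inv_mul _ hM''q, add_sub_cancel, ← Matrix.mul_assoc,
      mul_nonsing_inv _ hMq, Matrix.one_mul]
  refine le_antisymm ?_ ?_
  · rw [h₁, mulVecLin_mul]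
    exact LinearMap.range_comp_le_range _ _
  · rw [h₂, mulVecLin_mul]
    exact LinearMap.range_comp_le_range _ _

theorem PairedIso.exists_units_norm_pairVal_sub_le_one {M M' : Matrix ι ι ℤ_[p]}
    (hM' : M'.det ≠ 0) (h : PairedIso M M') :
    ∃ U : (Matrix ι ι ℤ_[p])ˣ, ∀ X Y,
      ‖pairVal M X Y - pairVal M' (↑U *ᵥ X) (↑U *ᵥ Y)‖ ≤ 1 := by
  obtain ⟨e, he⟩ := h
  obtain ⟨U, hU⟩ := Matrix.exists_units_mulVec_lift
    (e.toLinearEquiv (e.toAddMonoidHom.map_smul_of_pow_smul_eq_zero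
      (Matrix.pow_valuation_det_smul_cok hM')))
  exact ⟨U, fun X Y => he _ _ _ _ (hU X) (hU Y)⟩

theorem pairedIso_of_map_range_eq {M M' : Matrix ι ι ℤ_[p]} (hs : M'.IsSymm) (hd : M'.det ≠ 0)
    (U : (Matrix ι ι ℤ_[p])ˣ)
    (hU : (LinearMap.range M.mulVecLin).map (U : Matrix ι ι ℤ_[p]).mulVecLin =
      LinearMap.range M'.mulVecLin)
    (h : ∀ X Y, ‖pairVal M X Y - pairVal M' (↑U *ᵥ X) (↑U *ᵥ Y)‖ ≤ 1) :
    PairedIso M M' := by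
  let e : M.Cok ≃ₗ[ℤ_[p]] M'.Cok :=
    Submodule.Quotient.equiv _ _ (GeneralLinearGroup.toLin U).toLinearEquiv hU
  refine ⟨e.toAddEquiv, fun X Y X' Y' hX hY => ?_⟩
  calc ‖pairVal M X Y - pairVal M' X' Y'‖
      = ‖(pairVal M X Y - pairVal M' (↑U *ᵥ X) (↑U *ᵥ Y)) +
          (pairVal M' (↑U *ᵥ X) (↑U *ᵥ Y) - pairVal M' X' Y')‖ := by
        rw [sub_add_sub_cancel]
    _ ≤ 1 := (IsUltrametricDist.norm_add_le_max _ _).trans <|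
      max_le (h X Y) (norm_pairVal_sub_le_one_of_mk_eq hs hd hX hY)

end Padic

theorem stmt_0_general {p : ℕ} [Fact p.Prime] {n : ℕ}
    (M M' : Matrix (Fin n) (Fin n) ℤ_[p]) (hM's : M'.IsSymm)
    (hMd : M.det ≠ 0) (hM'd : M'.det ≠ 0) :
    PairedIso M M' ↔
      ∃ M'' : Matrix (Fin n) (Fin n) ℤ_[p], M''.IsSymm ∧ M''.det ≠ 0 ∧
        M''.Congruent M' ∧
        ∀ i j, ‖((M.map (fun a => (a : ℚ_[p])))⁻¹ - (M''.map (fun a => (a : ℚ_[p])))⁻¹) i j‖ ≤ 1 := by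
  constructor
  · intro h
    obtain ⟨U, hU⟩ := h.exists_units_norm_pairVal_sub_le_one hM'd
    set W := ((U⁻¹ : (Matrix (Fin n) (Fin n) ℤ_[p])ˣ) : Matrix (Fin n) (Fin n) ℤ_[p])
    have hW : IsUnit W.det := (Matrix.isUnit_iff_isUnit_det _).1 (U⁻¹).isUnit
    have hconj := Matrix.units_conj_inv_conj U M'
    refine ⟨W * M' * Wᵀ, hM's.mul_mul_transpose W, ?_, ⟨U, hconj⟩,
      (forall_norm_pairVal_sub_le_one_iff _ _).1 fun X Y => ?_⟩
    · rw [Matrix.det_mul, Matrix.det_mul, Matrix.det_transpose]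
      exact mul_ne_zero (mul_ne_zero hW.ne_zero hM'd) hW.ne_zero
    · rw [← pairVal_conj U (W * M' * Wᵀ), hconj]
      exact hU X Y
  · rintro ⟨M'', -, hM''d, ⟨U, rfl⟩, hint⟩
    refine pairedIso_of_map_range_eq hM's hM'd U ?_ fun X Y => ?_
    · rw [range_mulVecLin_eq_of_norm_inv_sub_inv_le_one hMd hM''d hint,
        Matrix.map_range_mulVecLin_units]
    · rw [pairVal_conj]
      exact (forall_norm_pairVal_sub_le_one_iff _ _).2 hint X Y

/-- For nonsingular symmetric `M, M' ∈ Sym_n(ℤ_p)`, the paired cokernels are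
isomorphic iff there is a nonsingular symmetric `M''` congruent to `M'` with
`M⁻¹ - (M'')⁻¹ ∈ Sym_n(ℤ_p)` (inverses over `ℚ_p`). -/
theorem stmt_0 {p : ℕ} [Fact p.Prime] {n : ℕ} (hn : 1 ≤ n)
    (M M' : Matrix (Fin n) (Fin n) ℤ_[p]) (hMs : M.IsSymm) (hM's : M'.IsSymm)
    (hMd : M.det ≠ 0) (hM'd : M'.det ≠ 0) :
    PairedIso M M' ↔
      ∃ M'' : Matrix (Fin n) (Fin n) ℤ_[p], M''.IsSymm ∧ M''.det ≠ 0 ∧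
        M''.Congruent M' ∧
        ∀ i j, ‖((M.map (fun a => (a : ℚ_[p])))⁻¹ - (M''.map (fun a => (a : ℚ_[p])))⁻¹) i j‖ ≤ 1 :=
  stmt_0_general M M' hM's hMd hM'd
end

section
/- Let p be an odd prime, n ≥ 1, and let M ∈ Sym_n(ℤ_p) be nonsingular. Set e = Dep_p(Cok(M)) + 1. Then for every ΔM ∈ Sym_n(ℤ_p) all of whose entries lie in p^e ℤ_p, the matrices M and M + ΔM are congruent under GL_n(ℤ_p). -/
open Matrix MeasureTheory

/-!
Put `c = p ^ d`. Since `c` kills `Cok M`, there is a symmetric `N` with `M N = N M = c`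
(so `N = c M⁻¹`), and `ΔM = c G` with `G ≡ 0 mod p`. As `2` is invertible, conjugating
`M + c G` by `1 - G N / 2` gives `M + c G'` with `G'` quadratic in `G`, so each such Newton step
gains a factor `p` in the defect. The product of the conjugating factors converges `p`-adically
to a matrix `≡ 1 mod p`, hence invertible, which carries `M + ΔM` to `M`.
-/

open Filter Topology

namespace Matrix

variable {R : Type*} [CommRing R] {n : Type*} [Fintype n]

section

variable [DecidableEq n]

theorem Congruent.symm {A B : Matrix n n R} (h : A.Congruent B) : B.Congruent A := by
  obtain ⟨U, rfl⟩ := h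
  refine ⟨U⁻¹, ?_⟩
  calc ((U⁻¹ : (Matrix n n R)ˣ) : Matrix n n R) * (U * A * (U : Matrix n n R)ᵀ) *
        ((U⁻¹ : (Matrix n n R)ˣ) : Matrix n n R)ᵀ
      = (↑U⁻¹ * ↑U) * A * (↑U⁻¹ * ↑U : Matrix n n R)ᵀ := by
        simp only [transpose_mul, mul_assoc]
    _ = A := by rw [U.inv_mul, transpose_one, one_mul, mul_one]

theorem exists_mul_eq_smul_one {M : Matrix n n R} {a : R} (h : ∀ x : M.Cok, a • x = 0) :
    ∃ N : Matrix n n R, M * N = a • 1 := by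
  have hcol (j : n) : ∃ w : n → R, M *ᵥ w = a • Pi.single j 1 := by
    have := h (Submodule.Quotient.mk (Pi.single j 1))
    rwa [← Submodule.Quotient.mk_smul, Submodule.Quotient.mk_eq_zero] at this
  choose w hw using hcol
  refine ⟨(of w)ᵀ, ?_⟩
  ext i j
  simpa [mul_apply, mulVec, dotProduct, one_apply, Pi.single_apply, eq_comm] using
    congrFun (hw j) i

theorem transpose_eq_of_mul_eq_smul_one [NoZeroDivisors R] {M N : Matrix n n R} {a : R}
    (ha : a ≠ 0) (hM : Mᵀ = M) (h : M * N = a • 1) : Nᵀ = N := by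
  have hNM : Nᵀ * M = a • 1 := by
    simpa only [transpose_mul, hM, transpose_smul, transpose_one] using congrArg transpose h
  apply smul_right_injective _ ha
  calc a • Nᵀ = Nᵀ * (M * N) := by rw [h, Matrix.mul_smul, mul_one]
    _ = a • N := by rw [← mul_assoc, hNM, Matrix.smul_mul, one_mul]

theorem mul_eq_smul_one_of_transpose {M N : Matrix n n R} {a : R} (hM : Mᵀ = M) (hN : Nᵀ = N)
    (h : M * N = a • 1) : N * M = a • 1 := by
  rw [← hM, ← hN, ← transpose_mul, h, transpose_smul, transpose_one]

theorem isUnit_of_sub_one_eq_smul [IsLocalRing R] {U B : Matrix n n R} {π : R}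
    (hπ : π ∈ IsLocalRing.maximalIdeal R) (h : U - 1 = π • B) : IsUnit U := by
  have hres : U.map (IsLocalRing.residue R) = 1 := by
    rw [sub_eq_iff_eq_add] at h
    ext i j
    simp [h, (IsLocalRing.residue_eq_zero_iff π).2 hπ, one_apply, apply_ite]
  rw [isUnit_iff_isUnit_det]
  apply isUnit_of_map_unit (IsLocalRing.residue R)
  rw [RingHom.map_det, RingHom.mapMatrix_apply, hres, det_one]
  exact isUnit_one

-- For `N = c M⁻¹` and `h = 1/2`, the factor `1 - h G N` cancels the part of the defect `c G`
-- that is linear in `G`.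
theorem newton_step_eq (M N G : Matrix n n R) {c h : R} (hMN : M * N = c • 1)
    (hNM : N * M = c • 1) (h2 : 2 * h = 1) :
    (1 - h • (G * N)) * (M + c • G) * (1 - h • (N * G)) =
      M + c • ((h ^ 2 - 1) • (G * N * G) + h ^ 2 • (G * N * G * N * G)) := by
  have hMN' (X : Matrix n n R) : M * (N * X) = c • X := by
    rw [← mul_assoc, hMN, Matrix.smul_mul, one_mul]
  simp only [sub_mul, mul_sub, add_mul, mul_add, one_mul, mul_one, Matrix.smul_mul,
    Matrix.mul_smul, mul_assoc, hMN', hNM, smul_add, smul_smul]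
  match_scalars <;> first | ring1 | linear_combination (-c) * h2

end

section Newton

variable (N G₀ : Matrix n n R) (h : R)

def newtonError : ℕ → Matrix n n R
  | 0 => G₀
  | k + 1 =>
    let G := newtonError k
    (h ^ 2 - 1) • (G * N * G) + h ^ 2 • (G * N * G * N * G)

variable {N G₀ h}

theorem newtonError_transpose (hN : Nᵀ = N) (hG₀ : G₀ᵀ = G₀) (k : ℕ) :
    (newtonError N G₀ h k)ᵀ = newtonError N G₀ h k := by
  induction k with
  | zero => exact hG₀
  | succ k ih =>
    simp only [newtonError, transpose_add, transpose_smul, transpose_mul, ih, hN, mul_assoc]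

theorem exists_newtonError_eq_pow_smul {π : R} (hG₀ : ∃ B, G₀ = π • B) (k : ℕ) :
    ∃ B, newtonError N G₀ h k = π ^ (k + 1) • B := by
  induction k with
  | zero => simpa [newtonError] using hG₀
  | succ k ih =>
    obtain ⟨B, hB⟩ := ih
    refine ⟨π ^ k • ((h ^ 2 - 1) • (B * N * B) +
      (π ^ (k + 1) * h ^ 2) • (B * N * B * N * B)), ?_⟩
    simp only [newtonError, hB, Matrix.smul_mul, Matrix.mul_smul, smul_smul, smul_add]
    match_scalars <;> ring

variable [DecidableEq n]

def newtonTransform (N G₀ : Matrix n n R) (h : R) : ℕ → Matrix n n R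
  | 0 => 1
  | k + 1 => (1 - h • (newtonError N G₀ h k * N)) * newtonTransform N G₀ h k

theorem newtonTransform_mul_mul_transpose {M : Matrix n n R} {c : R} (hMN : M * N = c • 1)
    (hNM : N * M = c • 1) (hN : Nᵀ = N) (h2 : 2 * h = 1) (hG₀ : G₀ᵀ = G₀) (k : ℕ) :
    newtonTransform N G₀ h k * (M + c • G₀) * (newtonTransform N G₀ h k)ᵀ =
      M + c • newtonError N G₀ h k := by
  induction k with
  | zero => simp [newtonTransform, newtonError]
  | succ k ih =>
    set G := newtonError N G₀ h k
    have hPt : (1 - h • (G * N))ᵀ = 1 - h • (N * G) := by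
      rw [transpose_sub, transpose_one, transpose_smul, transpose_mul, hN,
        newtonError_transpose hN hG₀]
    calc newtonTransform N G₀ h (k + 1) * (M + c • G₀) * (newtonTransform N G₀ h (k + 1))ᵀ
        = (1 - h • (G * N)) * (newtonTransform N G₀ h k * (M + c • G₀) *
            (newtonTransform N G₀ h k)ᵀ) * (1 - h • (G * N))ᵀ := by
          simp only [newtonTransform, transpose_mul, mul_assoc, G]
      _ = M + c • newtonError N G₀ h (k + 1) := by
          rw [ih, hPt, newton_step_eq M N G hMN hNM h2]
          rfl

theorem exists_newtonTransform_succ_sub_eq_pow_smul {π : R} (hG₀ : ∃ B, G₀ = π • B)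
    (k : ℕ) :
    ∃ B, newtonTransform N G₀ h (k + 1) - newtonTransform N G₀ h k = π ^ (k + 1) • B := by
  obtain ⟨B, hB⟩ := exists_newtonError_eq_pow_smul (N := N) (h := h) hG₀ k
  refine ⟨-h • (B * N * newtonTransform N G₀ h k), ?_⟩
  simp only [newtonTransform, hB, sub_mul, one_mul, Matrix.smul_mul, smul_smul,
    sub_sub_cancel_left]
  module

end Newton

end Matrix

namespace PadicInt

variable {p : ℕ} [Fact p.Prime]

theorem isUnit_two (hp : Odd p) : IsUnit (2 : ℤ_[p]) := by
  rw [isUnit_iff, ← Nat.cast_ofNat, norm_natCast_eq_one_iff, Nat.coprime_two_right]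
  exact hp

theorem tendsto_zero_of_pow_dvd {x : ℕ → ℤ_[p]} (h : ∀ k, (p : ℤ_[p]) ^ k ∣ x k) :
    Tendsto x atTop (𝓝 0) := by
  have hp : ‖(p : ℤ_[p])‖ < 1 := by
    rw [norm_p]; exact inv_lt_one_of_one_lt₀ (mod_cast (Fact.out : p.Prime).one_lt)
  refine squeeze_zero_norm (fun k => ?_) (tendsto_pow_atTop_nhds_zero_of_lt_one (norm_nonneg _) hp)
  obtain ⟨y, hy⟩ := h k
  rw [hy, norm_mul, norm_pow]
  exact mul_le_of_le_one_right (by positivity) (norm_le_one y)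

theorem exists_tendsto_of_pow_dvd_sub {x : ℕ → ℤ_[p]}
    (h : ∀ k, (p : ℤ_[p]) ^ (k + 1) ∣ x (k + 1) - x k) :
    ∃ L, Tendsto x atTop (𝓝 L) ∧ (p : ℤ_[p]) ∣ L - x 0 := by
  have hdiff : Tendsto (fun k => x (k + 1) - x k) atTop (𝓝 0) :=
    tendsto_zero_of_pow_dvd fun k => (pow_dvd_pow _ k.le_succ).trans (h k)
  obtain ⟨L, hL⟩ := cauchySeq_tendsto_of_complete
    (NonarchimedeanAddGroup.cauchySeq_of_tendsto_sub_nhds_zero hdiff)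
  refine ⟨L, hL, ?_⟩
  have hball (y : ℤ_[p]) : (p : ℤ_[p]) ∣ y - x 0 ↔ y ∈ Metric.ball (x 0) 1 := by
    rw [Metric.mem_ball, dist_eq_norm, norm_lt_one_iff_dvd]
  have hx (k : ℕ) : (p : ℤ_[p]) ∣ x k - x 0 := by
    induction k with
    | zero => simp
    | succ k ih =>
      rw [← sub_add_sub_cancel]
      exact dvd_add ((dvd_pow_self _ k.succ_ne_zero).trans (h k)) ih
  rw [hball]
  exact (IsUltrametricDist.isClosed_ball _ _).mem_of_tendsto hL
    (Eventually.of_forall fun k => (hball _).1 (hx k))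

end PadicInt

namespace Matrix

variable {n : Type*} {p : ℕ} [Fact p.Prime]

theorem tendsto_zero_of_eq_pow_smul {X : ℕ → Matrix n n ℤ_[p]}
    (h : ∀ k, ∃ B, X k = (p : ℤ_[p]) ^ k • B) : Tendsto X atTop (𝓝 0) := by
  choose B hB using h
  refine tendsto_pi_nhds.2 fun i => tendsto_pi_nhds.2 fun j => ?_
  exact PadicInt.tendsto_zero_of_pow_dvd fun k => ⟨B k i j, by rw [hB]; rfl⟩

theorem exists_tendsto_of_sub_eq_pow_smul {U : ℕ → Matrix n n ℤ_[p]}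
    (h : ∀ k, ∃ B, U (k + 1) - U k = (p : ℤ_[p]) ^ (k + 1) • B) :
    ∃ L, Tendsto U atTop (𝓝 L) ∧ ∃ B, L - U 0 = (p : ℤ_[p]) • B := by
  choose B hB using h
  have hentry (i j : n) := PadicInt.exists_tendsto_of_pow_dvd_sub (x := fun k => U k i j)
    fun k => ⟨B k i j, congrFun (congrFun (hB k) i) j⟩
  choose L hL c hc using hentry
  refine ⟨of L, tendsto_pi_nhds.2 fun i => tendsto_pi_nhds.2 (hL i), of c, ?_⟩
  ext i j
  exact hc i j

theorem congruent_add_smul [Fintype n] [DecidableEq n] {M N G : Matrix n n ℤ_[p]} {c h : ℤ_[p]}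
    (hMN : M * N = c • 1) (hNM : N * M = c • 1) (hN : Nᵀ = N) (h2 : 2 * h = 1)
    (hG : Gᵀ = G) (hGp : ∃ B, G = (p : ℤ_[p]) • B) :
    M.Congruent (M + c • G) := by
  obtain ⟨L, hTL, B, hLB⟩ :=
    exists_tendsto_of_sub_eq_pow_smul (exists_newtonTransform_succ_sub_eq_pow_smul hGp)
  have hLunit : IsUnit L :=
    isUnit_of_sub_one_eq_smul ((IsLocalRing.mem_maximalIdeal _).2 PadicInt.p_nonunit) hLB
  have hlim : Tendsto (fun k => M + c • newtonError N G h k) atTop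
      (𝓝 (L * (M + c • G) * Lᵀ)) := by
    simp only [← newtonTransform_mul_mul_transpose hMN hNM hN h2 hG]
    exact (hTL.mul tendsto_const_nhds).mul
      ((continuous_id.matrix_transpose.tendsto L).comp hTL)
  have herr : Tendsto (fun k => M + c • newtonError N G h k) atTop (𝓝 M) := by
    have := tendsto_zero_of_eq_pow_smul (X := newtonError N G h) fun k => by
      obtain ⟨B, hB⟩ := exists_newtonError_eq_pow_smul (N := N) (h := h) hGp k
      exact ⟨(p : ℤ_[p]) • B, by rw [hB, smul_smul, ← pow_succ]⟩
    simpa using tendsto_const_nhds.add (this.const_smul c)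
  exact Congruent.symm ⟨hLunit.unit, tendsto_nhds_unique hlim herr⟩

end Matrix

theorem stmt_1_general {p : ℕ} [Fact p.Prime] (hp : Odd p) {n : ℕ}
    (M : Matrix (Fin n) (Fin n) ℤ_[p]) (hMs : M.IsSymm)
    (d : ℕ) (hd : AddMonoid.exponent M.Cok = p ^ d)
    (ΔM : Matrix (Fin n) (Fin n) ℤ_[p]) (hΔs : ΔM.IsSymm)
    (hΔ : ∀ i j, (p : ℤ_[p]) ^ (d + 1) ∣ ΔM i j) :
    M.Congruent (M + ΔM) := by
  have hc : (p : ℤ_[p]) ^ d ≠ 0 :=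
    pow_ne_zero _ (Nat.cast_ne_zero.2 (Fact.out : p.Prime).ne_zero)
  obtain ⟨N, hMN⟩ := exists_mul_eq_smul_one (M := M) (a := (p : ℤ_[p]) ^ d) fun x => by
    rw [← Nat.cast_pow, Nat.cast_smul_eq_nsmul, ← hd]
    exact AddMonoid.exponent_nsmul_eq_zero x
  have hN : Nᵀ = N := transpose_eq_of_mul_eq_smul_one hc hMs hMN
  obtain ⟨h, h2⟩ := (PadicInt.isUnit_two hp).exists_right_inv
  choose B hB using hΔ
  have hΔG : ΔM = (p : ℤ_[p]) ^ d • ((p : ℤ_[p]) • of B) := by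
    ext i j
    simp [hB, pow_succ, mul_assoc]
  have hG : ((p : ℤ_[p]) • of B)ᵀ = (p : ℤ_[p]) • of B := by
    refine smul_right_injective _ hc ?_
    dsimp only
    rw [← transpose_smul, ← hΔG]
    exact hΔs
  rw [hΔG]
  exact congruent_add_smul hMN (mul_eq_smul_one_of_transpose hMs hN hMN) hN h2 hG
    ⟨_, rfl⟩

/-- For `p` odd, a nonsingular symmetric `M ∈ Sym_n(ℤ_p)` with
`Dep_p(Cok(M)) = d` (i.e. the exponent of `Cok(M)` is `p^d`), and any symmetric `ΔM` all of
whose entries lie in `p^(d+1) ℤ_p`, the matrices `M` and `M + ΔM` are congruent. -/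
theorem stmt_1 {p : ℕ} [Fact p.Prime] (hp : Odd p) {n : ℕ} (hn : 1 ≤ n)
    (M : Matrix (Fin n) (Fin n) ℤ_[p]) (hMs : M.IsSymm) (hMd : M.det ≠ 0)
    (d : ℕ) (hd : AddMonoid.exponent M.Cok = p ^ d)
    (ΔM : Matrix (Fin n) (Fin n) ℤ_[p]) (hΔs : ΔM.IsSymm)
    (hΔ : ∀ i j, (p : ℤ_[p]) ^ (d + 1) ∣ ΔM i j) :
    M.Congruent (M + ΔM) :=
  stmt_1_general hp M hMs d hd ΔM hΔs hΔ
end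

section
/- Let n ≥ 1 and let M ∈ Sym_n(ℤ_2) be nonsingular. Set e = Dep_2(Cok(M)) + 3. Then for every ΔM ∈ Sym_n(ℤ_2) all of whose entries lie in 2^e ℤ_2, the matrices M and M + ΔM are congruent under GL_n(ℤ_2). -/
open Matrix MeasureTheory

section auxPriv

private lemma matMulLeftCancel {n : ℕ} (M X Y : Matrix (Fin n) (Fin n) ℤ_[2]) (hMd : M.det ≠ 0)
    (h : M * X = M * Y) : X = Y := by
  have h2 : M.adjugate * (M * X) = M.adjugate * (M * Y) := by rw [h]
  rw [← mul_assoc, ← mul_assoc, Matrix.adjugate_mul, Matrix.smul_mul, Matrix.smul_mul,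
    one_mul, one_mul] at h2
  ext i j
  have := congrFun (congrFun h2 i) j
  simp only [Matrix.smul_apply, smul_eq_mul] at this
  exact mul_left_cancel₀ hMd this

private lemma matMulRightCancel {n : ℕ} (M X Y : Matrix (Fin n) (Fin n) ℤ_[2]) (hMd : M.det ≠ 0)
    (h : X * M = Y * M) : X = Y := by
  have h2 : (X * M) * M.adjugate = (Y * M) * M.adjugate := by rw [h]
  rw [mul_assoc, mul_assoc, Matrix.mul_adjugate, Matrix.mul_smul, Matrix.mul_smul,
    mul_one, mul_one] at h2
  ext i j
  have := congrFun (congrFun h2 i) j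
  simp only [Matrix.smul_apply, smul_eq_mul] at this
  exact mul_left_cancel₀ hMd this

set_option maxHeartbeats 1000000 in
private lemma key_identity {n : ℕ} (M B X : Matrix (Fin n) (Fin n) ℤ_[2]) (d k : ℕ)
    (hMB : M * B = (2:ℤ_[2])^d • 1) (hBM : B * M = (2:ℤ_[2])^d • 1)
    (hB : Bᵀ = B) (hX : Xᵀ = X) :
    (1 + (-(2:ℤ_[2])^(2+k)) • (X*B)) * (M + ((2:ℤ_[2])^(d+3+k)) • X)
      * (1 + (-(2:ℤ_[2])^(2+k)) • (X*B))ᵀ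
    = M + ((2:ℤ_[2])^(d+3+(k+1))) •
        ((-3*2^k : ℤ_[2]) • (X*B*X) + ((2:ℤ_[2])^(3+2*k)) • (X*B*X*B*X)) := by
  have htr : (1 + (-(2:ℤ_[2])^(2+k)) • (X*B))ᵀ = 1 + (-(2:ℤ_[2])^(2+k)) • (B*X) := by
    rw [transpose_add, transpose_one, transpose_smul, transpose_mul, hB, hX]
  rw [htr]
  have h1 : ((-(2:ℤ_[2])^(2+k)) • (X*B)) * M = (-((2:ℤ_[2])^(2+k) * 2^d)) • X := by
    rw [Matrix.smul_mul, mul_assoc, hBM, Matrix.mul_smul, mul_one, smul_smul, neg_mul]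
  have h3 : ((-(2:ℤ_[2])^(2+k)) • (X*B)) * (((2:ℤ_[2])^(d+3+k)) • X)
      = (-((2:ℤ_[2])^(2+k)*(2:ℤ_[2])^(d+3+k))) • (X*B*X) := by
    rw [Matrix.smul_mul, Matrix.mul_smul, smul_smul, neg_mul]
  have step1 : (1 + (-(2:ℤ_[2])^(2+k)) • (X*B)) * (M + ((2:ℤ_[2])^(d+3+k)) • X)
      = M + (((2:ℤ_[2])^(d+3+k)) + -((2:ℤ_[2])^(2+k) * 2^d)) • X
        + (-((2:ℤ_[2])^(2+k)*(2:ℤ_[2])^(d+3+k))) • (X*B*X) := by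
    rw [add_mul, one_mul, mul_add, h1, h3]
    module
  rw [step1, add_mul, add_mul, mul_add, mul_one, mul_add, mul_add, mul_one, mul_one]
  have h2 : M * ((-(2:ℤ_[2])^(2+k)) • (B*X)) = (-((2:ℤ_[2])^(2+k) * 2^d)) • X := by
    rw [Matrix.mul_smul, ← mul_assoc, hMB, Matrix.smul_mul, one_mul, smul_smul, neg_mul]
  have h4 : ((((2:ℤ_[2])^(d+3+k)) + -((2:ℤ_[2])^(2+k) * 2^d)) • X) * ((-(2:ℤ_[2])^(2+k)) • (B*X))
      = ((((2:ℤ_[2])^(d+3+k)) + -((2:ℤ_[2])^(2+k) * 2^d)) * (-(2:ℤ_[2])^(2+k))) • (X*B*X) := by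
    rw [Matrix.smul_mul, Matrix.mul_smul, smul_smul, ← mul_assoc]
  have h5 : ((-((2:ℤ_[2])^(2+k)*(2:ℤ_[2])^(d+3+k))) • (X*B*X)) * ((-(2:ℤ_[2])^(2+k)) • (B*X))
      = (((2:ℤ_[2])^(2+k)*(2:ℤ_[2])^(d+3+k))*(2:ℤ_[2])^(2+k)) • (X*B*X*B*X) := by
    rw [Matrix.smul_mul, Matrix.mul_smul, smul_smul, ← mul_assoc]
    module
  rw [h2, h4, h5]
  module

private lemma exists_B {n : ℕ} (M : Matrix (Fin n) (Fin n) ℤ_[2]) (hMd : M.det ≠ 0)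
    (hM : Mᵀ = M) (d : ℕ) (hd : AddMonoid.exponent M.Cok = 2 ^ d) :
    ∃ B : Matrix (Fin n) (Fin n) ℤ_[2],
      M * B = (2:ℤ_[2])^d • 1 ∧ B * M = (2:ℤ_[2])^d • 1 ∧ Bᵀ = B := by
  have hcol : ∀ j, ∃ y, M.mulVec y = (2:ℤ_[2])^d • (Pi.single j 1 : Fin n → ℤ_[2]) := by
    intro j
    have h0 := AddMonoid.exponent_nsmul_eq_zero
      (Submodule.Quotient.mk (Pi.single j 1) : M.Cok)
    rw [hd] at h0
    have h1 : ((2:ℤ_[2])^d) • (Submodule.Quotient.mk (Pi.single j 1) : M.Cok) = 0 := by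
      have : (((2^d : ℕ) : ℤ_[2])) • (Submodule.Quotient.mk (Pi.single j 1) : M.Cok)
          = (2^d : ℕ) • (Submodule.Quotient.mk (Pi.single j 1) : M.Cok) :=
        Nat.cast_smul_eq_nsmul _ _ _
      rw [h0] at this
      have h2 : (((2^d : ℕ) : ℤ_[2])) = (2:ℤ_[2])^d := by push_cast; ring
      rwa [h2] at this
    rw [← Submodule.Quotient.mk_smul, Submodule.Quotient.mk_eq_zero,
      LinearMap.mem_range] at h1
    obtain ⟨y, hy⟩ := h1
    exact ⟨y, by rwa [Matrix.mulVecLin_apply] at hy⟩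
  classical
  have hMB : M * (Matrix.of fun i j => (hcol j).choose i) = (2:ℤ_[2])^d • 1 := by
    ext i j
    have hy := (hcol j).choose_spec
    have : (M * (Matrix.of fun i j => (hcol j).choose i)) i j
        = (M.mulVec ((hcol j).choose)) i := by
      simp [Matrix.mul_apply, Matrix.mulVec, dotProduct]
    rw [this, hy]
    simp [Matrix.smul_apply, Matrix.one_apply, Pi.single_apply, eq_comm]
  have hBM : (Matrix.of fun i j => (hcol j).choose i) * M = (2:ℤ_[2])^d • 1 := by
    apply matMulLeftCancel M _ _ hMd
    rw [← mul_assoc, hMB, Matrix.smul_mul, one_mul, Matrix.mul_smul, mul_one]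
  refine ⟨Matrix.of fun i j => (hcol j).choose i, hMB, hBM, ?_⟩
  apply matMulRightCancel M _ _ hMd
  have h2 : (M * (Matrix.of fun i j => (hcol j).choose i))ᵀ
      = (Matrix.of fun i j => (hcol j).choose i)ᵀ * M := by
    rw [Matrix.transpose_mul, hM]
  rw [← h2, hMB, hBM, Matrix.transpose_smul, Matrix.transpose_one]

private lemma norm_le_of_dvd {m : ℕ} {x : ℤ_[2]} (h : (2:ℤ_[2])^m ∣ x) :
    ‖x‖ ≤ (2:ℝ)^(-(m:ℤ)) := by
  have : x ∈ Ideal.span {(2:ℤ_[2])^m} := Ideal.mem_span_singleton.mpr h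
  have h2 : x ∈ Ideal.span {((2:ℕ):ℤ_[2])^m} := by simpa using this
  exact (PadicInt.norm_le_pow_iff_mem_span_pow x m).mpr h2

end auxPriv

/-- For a nonsingular symmetric `M ∈ Sym_n(ℤ_2)` with `Dep_2(Cok(M)) = d`
(i.e. the exponent of `Cok(M)` is `2^d`), and any symmetric `ΔM` all of whose entries lie in
`2^(d+3) ℤ_2`, the matrices `M` and `M + ΔM` are congruent under `GL_n(ℤ_2)`. -/
theorem stmt_2 {n : ℕ} (hn : 1 ≤ n)
    (M : Matrix (Fin n) (Fin n) ℤ_[2]) (hMs : M.IsSymm) (hMd : M.det ≠ 0)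
    (d : ℕ) (hd : AddMonoid.exponent M.Cok = 2 ^ d)
    (ΔM : Matrix (Fin n) (Fin n) ℤ_[2]) (hΔs : ΔM.IsSymm)
    (hΔ : ∀ i j, (2 : ℤ_[2]) ^ (d + 3) ∣ ΔM i j) :
    M.Congruent (M + ΔM) := by
  classical
  obtain ⟨B, hMB, hBM, hB⟩ := exists_B M hMd hMs d hd
  -- extract S₀ with ΔM = 2^(d+3) • S₀
  have hS0 : ∃ S0 : Matrix (Fin n) (Fin n) ℤ_[2],
      ΔM = ((2:ℤ_[2])^(d+3)) • S0 ∧ S0ᵀ = S0 := by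
    refine ⟨Matrix.of fun i j => (hΔ i j).choose, ?_, ?_⟩
    · ext i j
      simpa [Matrix.smul_apply] using (hΔ i j).choose_spec
    · ext i j
      have hij := (hΔ i j).choose_spec
      have hji := (hΔ j i).choose_spec
      have h2 : ΔM j i = ΔM i j := by
        have := congrFun (congrFun hΔs j) i
        simpa using this.symm
      apply mul_left_cancel₀ (a := (2:ℤ_[2])^(d+3)) (pow_ne_zero _ (by norm_num))
      simp only [Matrix.transpose_apply, Matrix.of_apply]
      rw [← hij, ← hji, h2]
  obtain ⟨S0, hΔeq, hS0symm⟩ := hS0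
  -- recursive sequence of remainders
  set S : ℕ → Matrix (Fin n) (Fin n) ℤ_[2] := fun k =>
    Nat.rec S0 (fun k Sk =>
      (-3*2^k : ℤ_[2]) • (Sk*B*Sk) + ((2:ℤ_[2])^(3+2*k)) • (Sk*B*Sk*B*Sk)) k with hS
  have hSsucc : ∀ k, S (k+1)
      = (-3*2^k : ℤ_[2]) • (S k*B*S k) + ((2:ℤ_[2])^(3+2*k)) • (S k*B*S k*B*S k) :=
    fun k => rfl
  have hSsymm : ∀ k, (S k)ᵀ = S k := by
    intro k
    induction k with
    | zero => exact hS0symm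
    | succ k ih =>
      rw [hSsucc k]
      simp only [transpose_add, transpose_smul, transpose_mul, ih, hB, mul_assoc]
  -- partial products
  set P : ℕ → Matrix (Fin n) (Fin n) ℤ_[2] := fun k =>
    Nat.rec 1 (fun k Pk => (1 + (-(2:ℤ_[2])^(2+k)) • (S k * B)) * Pk) k with hP
  have hPsucc : ∀ k, P (k+1) = (1 + (-(2:ℤ_[2])^(2+k)) • (S k * B)) * P k := fun k => rfl
  -- the invariant
  have hinv : ∀ k, P k * (M + ΔM) * (P k)ᵀ = M + ((2:ℤ_[2])^(d+3+k)) • S k := by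
    intro k
    induction k with
    | zero =>
      show (1 : Matrix (Fin n) (Fin n) ℤ_[2]) * (M + ΔM) * (1:Matrix (Fin n) (Fin n) ℤ_[2])ᵀ = _
      rw [transpose_one, one_mul, mul_one, hΔeq]
      rfl
    | succ k ih =>
      rw [hPsucc k, transpose_mul]
      calc (1 + (-(2:ℤ_[2])^(2+k)) • (S k * B)) * P k * (M + ΔM)
            * ((P k)ᵀ * (1 + (-(2:ℤ_[2])^(2+k)) • (S k * B))ᵀ)
          = (1 + (-(2:ℤ_[2])^(2+k)) • (S k * B)) * (P k * (M + ΔM) * (P k)ᵀ)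
            * (1 + (-(2:ℤ_[2])^(2+k)) • (S k * B))ᵀ := by
            noncomm_ring
        _ = (1 + (-(2:ℤ_[2])^(2+k)) • (S k * B)) * (M + ((2:ℤ_[2])^(d+3+k)) • S k)
            * (1 + (-(2:ℤ_[2])^(2+k)) • (S k * B))ᵀ := by rw [ih]
        _ = M + ((2:ℤ_[2])^(d+3+(k+1))) • S (k+1) := by
            rw [key_identity M B (S k) d k hMB hBM hB (hSsymm k), hSsucc k]
  -- entrywise Cauchy and limit
  have hdiff : ∀ k, P (k+1) - P k = (-(2:ℤ_[2])^(2+k)) • ((S k * B) * P k) := by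
    intro k
    rw [hPsucc k, add_mul, one_mul, Matrix.smul_mul]
    abel
  have hnormdiff : ∀ k i j, ‖(P (k+1)) i j - (P k) i j‖ ≤ (1/4) * (1/2)^k := by
    intro k i j
    have h1 : (P (k+1)) i j - (P k) i j = (-(2:ℤ_[2])^(2+k)) * ((S k * B) * P k) i j := by
      have := congrFun (congrFun (hdiff k) i) j
      simpa [Matrix.sub_apply, Matrix.smul_apply] using this
    have h2 : (2:ℤ_[2])^(2+k) ∣ (P (k+1)) i j - (P k) i j := by
      rw [h1]; exact ⟨-((S k * B) * P k) i j, by ring⟩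
    calc ‖(P (k+1)) i j - (P k) i j‖ ≤ (2:ℝ)^(-((2+k : ℕ)):ℤ) := norm_le_of_dvd h2
      _ = (1/4) * (1/2)^k := by
          rw [_root_.zpow_neg, zpow_natCast, pow_add, mul_inv, ← inv_pow]
          norm_num
          rw [← inv_pow]
          norm_num
  have hcauchy : ∀ i j, ∃ v, Filter.Tendsto (fun k => (P k) i j) Filter.atTop (nhds v) := by
    intro i j
    apply cauchySeq_tendsto_of_complete
    apply cauchySeq_of_le_geometric (1/2) (1/4) (by norm_num)
    intro k
    rw [dist_eq_norm, norm_sub_rev]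
    exact hnormdiff k i j
  set V : Matrix (Fin n) (Fin n) ℤ_[2] := Matrix.of fun i j => (hcauchy i j).choose with hVdef
  have hV : ∀ i j, Filter.Tendsto (fun k => (P k) i j) Filter.atTop (nhds (V i j)) :=
    fun i j => (hcauchy i j).choose_spec
  -- V * (M + ΔM) * Vᵀ = M
  have hVM : V * (M + ΔM) * Vᵀ = M := by
    ext i j
    have limA : Filter.Tendsto (fun k => (P k * (M + ΔM) * (P k)ᵀ) i j) Filter.atTop
        (nhds ((V * (M + ΔM) * Vᵀ) i j)) := by
      simp only [Matrix.mul_apply, Matrix.transpose_apply]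
      apply tendsto_finset_sum
      intro b _
      apply Filter.Tendsto.mul _ (hV j b)
      apply tendsto_finset_sum
      intro a _
      exact (hV i a).mul tendsto_const_nhds
    have limB : Filter.Tendsto (fun k => (P k * (M + ΔM) * (P k)ᵀ) i j) Filter.atTop
        (nhds (M i j)) := by
      have heq : ∀ k, (P k * (M + ΔM) * (P k)ᵀ) i j
          = M i j + (2:ℤ_[2])^(d+3+k) * (S k) i j := by
        intro k
        have := congrFun (congrFun (hinv k) i) j
        simpa [Matrix.add_apply, Matrix.smul_apply] using this
      simp only [heq]
      have : Filter.Tendsto (fun k => (2:ℤ_[2])^(d+3+k) * (S k) i j) Filter.atTop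
          (nhds 0) := by
        apply squeeze_zero_norm (a := fun k => (1/2:ℝ)^k)
        · intro k
          have hdvd : (2:ℤ_[2])^k ∣ (2:ℤ_[2])^(d+3+k) * (S k) i j :=
            dvd_mul_of_dvd_left (pow_dvd_pow _ (by omega)) _
          calc ‖(2:ℤ_[2])^(d+3+k) * (S k) i j‖ ≤ (2:ℝ)^(-(k:ℤ)) := norm_le_of_dvd hdvd
            _ = (1/2)^k := by
                rw [_root_.zpow_neg, zpow_natCast, ← inv_pow]
                norm_num
        · exact tendsto_pow_atTop_nhds_zero_of_lt_one (by norm_num) (by norm_num)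
      simpa using tendsto_const_nhds.add this
    exact tendsto_nhds_unique limA limB
  -- V ≡ 1 mod 4 entrywise
  have hPmod : ∀ k i j, (2:ℤ_[2])^2 ∣ (P k - 1) i j := by
    intro k
    induction k with
    | zero => intro i j; simp [hP]
    | succ k ih =>
      intro i j
      have hsplit : P (k+1) - 1 = (P k - 1) + (-(2:ℤ_[2])^(2+k)) • ((S k * B) * P k) := by
        rw [← hdiff k]; abel
      rw [hsplit]
      have h2 : (2:ℤ_[2])^2 ∣ ((-(2:ℤ_[2])^(2+k)) • ((S k * B) * P k)) i j := by
        simp only [Matrix.smul_apply, smul_eq_mul]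
        exact ⟨-((2:ℤ_[2])^k * ((S k * B) * P k) i j), by ring⟩
      simpa [Matrix.add_apply] using dvd_add (ih i j) h2
  have hVmod : ∀ i j, (2:ℤ_[2])^2 ∣ (V - 1) i j := by
    intro i j
    have hlim : Filter.Tendsto (fun k => (P k - 1) i j) Filter.atTop
        (nhds ((V - 1) i j)) := by
      simp only [Matrix.sub_apply]
      exact (hV i j).sub tendsto_const_nhds
    have hnorm : ‖(V - 1) i j‖ ≤ (2:ℝ)^(-(2:ℕ):ℤ) := by
      apply le_of_tendsto hlim.norm
      filter_upwards with k
      exact norm_le_of_dvd (hPmod k i j)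
    have := (PadicInt.norm_le_pow_iff_mem_span_pow ((V-1) i j) 2).mp (by simpa using hnorm)
    simpa using Ideal.mem_span_singleton.mp this
  -- det V is a unit
  have hdetV : IsUnit V.det := by
    have hmap : V.map (Ideal.Quotient.mk (Ideal.span {(2:ℤ_[2])^2}))
        = (1 : Matrix (Fin n) (Fin n) ℤ_[2]).map (Ideal.Quotient.mk (Ideal.span {(2:ℤ_[2])^2})) := by
      ext i j
      simp only [Matrix.map_apply]
      rw [Ideal.Quotient.mk_eq_mk_iff_sub_mem, Ideal.mem_span_singleton]
      simpa [Matrix.sub_apply] using hVmod i j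
    have hdet4 : (2:ℤ_[2])^2 ∣ V.det - 1 := by
      have h0 := RingHom.map_det (Ideal.Quotient.mk (Ideal.span {(2:ℤ_[2])^2})) V
      rw [RingHom.mapMatrix_apply, hmap, Matrix.map_one _ (_root_.map_zero _) (_root_.map_one _), Matrix.det_one] at h0
      have h1 : (Ideal.Quotient.mk (Ideal.span {(2:ℤ_[2])^2})) V.det
          = (Ideal.Quotient.mk (Ideal.span {(2:ℤ_[2])^2})) (1:ℤ_[2]) := by
        rw [h0, _root_.map_one]
      rw [Ideal.Quotient.mk_eq_mk_iff_sub_mem, Ideal.mem_span_singleton] at h1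
      exact h1
    obtain ⟨w, hw⟩ := hdet4
    rw [PadicInt.isUnit_iff]
    have hVd : V.det = 1 + (2:ℤ_[2])^2 * w := by rw [← hw]; ring
    have hnw : ‖(2:ℤ_[2])^2 * w‖ < 1 := by
      calc ‖(2:ℤ_[2])^2 * w‖ ≤ (2:ℝ)^(-(2:ℕ):ℤ) := norm_le_of_dvd ⟨w, rfl⟩
        _ < 1 := by norm_num
    have hle : ‖V.det‖ ≤ 1 := PadicInt.norm_le_one _
    rcases lt_or_ge ‖V.det‖ 1 with hlt | hge
    · exfalso
      have h1 : (1:ℤ_[2]) = V.det - (2:ℤ_[2])^2 * w := by rw [hVd]; ring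
      have : ‖(1:ℤ_[2])‖ ≤ max ‖V.det‖ ‖-((2:ℤ_[2])^2 * w)‖ := by
        rw [h1, sub_eq_add_neg]; exact PadicInt.nonarchimedean _ _
      rw [norm_neg] at this
      simp only [norm_one] at this
      rcases max_cases ‖V.det‖ ‖(2:ℤ_[2])^2 * w‖ with ⟨hm, _⟩ | ⟨hm, _⟩ <;> rw [hm] at this <;>
        linarith
    · linarith
  -- conclude
  have hVunit : IsUnit V := (Matrix.isUnit_iff_isUnit_det V).mpr hdetV
  obtain ⟨u, hu⟩ := hVunit
  refine ⟨u⁻¹, ?_⟩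
  calc (↑u⁻¹ : Matrix (Fin n) (Fin n) ℤ_[2]) * M * (↑u⁻¹ : Matrix (Fin n) (Fin n) ℤ_[2])ᵀ
      = (↑u⁻¹ : Matrix (Fin n) (Fin n) ℤ_[2]) * (V * (M + ΔM) * Vᵀ)
        * (↑u⁻¹ : Matrix (Fin n) (Fin n) ℤ_[2])ᵀ := by rw [hVM]
    _ = (↑u⁻¹ : Matrix (Fin n) (Fin n) ℤ_[2]) * ((↑u : Matrix (Fin n) (Fin n) ℤ_[2])
          * (M + ΔM) * (↑u : Matrix (Fin n) (Fin n) ℤ_[2])ᵀ)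
        * (↑u⁻¹ : Matrix (Fin n) (Fin n) ℤ_[2])ᵀ := by rw [hu]
    _ = ((↑u⁻¹ : Matrix (Fin n) (Fin n) ℤ_[2]) * ↑u) * (M + ΔM)
        * ((↑u : Matrix (Fin n) (Fin n) ℤ_[2])ᵀ * (↑u⁻¹ : Matrix (Fin n) (Fin n) ℤ_[2])ᵀ) := by
          noncomm_ring
    _ = M + ΔM := by
          rw [← Matrix.transpose_mul, u.inv_mul, Matrix.transpose_one, one_mul, mul_one]
end

section
/- Let p be an odd prime and let α, α' ∈ p ℤ_p be nonzero elements such that α⁻¹ − (α')⁻¹ ∈ ℤ_p (the inverses being taken in ℚ_p). Then there exists a unit u ∈ ℤ_p^× such that α' = α u². -/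
/-!
Since `α'` lies in `pℤ_p`, the hypothesis gives `‖α' - α‖ = ‖α⁻¹ - α'⁻¹‖ ‖α‖ ‖α'‖ < ‖α‖`,
so `α' / α` is a `p`-adic integer congruent to `1` modulo `p`. For odd `p` the derivative
`2X` of `X² - α' / α` is a unit at `X = 1`, and Hensel's lemma produces the square root.
-/

open Polynomial

namespace PadicInt

variable {p : ℕ} [Fact p.Prime]

theorem norm_two_of_odd (hp : Odd p) : ‖(2 : ℤ_[p])‖ = 1 := by
  simpa using norm_natCast_eq_one_iff (p := p) (n := 2) |>.mpr hp.coprime_two_right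

theorem exists_unit_sq_eq_of_norm_sub_one_lt (hp : Odd p) {c : ℤ_[p]} (hc : ‖c - 1‖ < 1) :
    ∃ u : ℤ_[p]ˣ, (u : ℤ_[p]) ^ 2 = c := by
  set F : ℤ_[p][X] := X ^ 2 - C c
  have hF : ‖aeval (1 : ℤ_[p]) F‖ < ‖aeval (1 : ℤ_[p]) (derivative F)‖ ^ 2 := by
    simpa [F, one_add_one_eq_two, norm_two_of_odd hp, norm_sub_rev] using hc
  obtain ⟨z, hz, -⟩ := hensels_lemma hF
  have hzc : z ^ 2 = c := by simpa [F, sub_eq_zero] using hz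
  have hc_unit : IsUnit c :=
    IsLocalRing.isUnit_of_mem_nonunits_one_sub_self c (not_isUnit_iff.mpr (by rwa [norm_sub_rev]))
  exact ⟨((isUnit_pow_iff two_ne_zero).mp (hzc ▸ hc_unit)).unit, hzc⟩

theorem exists_unit_sq_mul_of_norm_sub_lt (hp : Odd p) {α α' : ℤ_[p]} (h : ‖α' - α‖ < ‖α‖) :
    ∃ u : ℤ_[p]ˣ, α' = α * u ^ 2 := by
  have hα_pos : 0 < ‖α‖ := (norm_nonneg _).trans_lt h
  have hα : (α : ℚ_[p]) ≠ 0 := norm_pos_iff.mp hα_pos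
  have hd : ‖((α' - α : ℤ_[p]) : ℚ_[p]) / α‖ < 1 := by
    rwa [norm_div, ← norm_def, ← norm_def, div_lt_one hα_pos]
  set d : ℤ_[p] := ⟨_, hd.le⟩
  have hd_coe : (d : ℚ_[p]) = ((α' - α : ℤ_[p]) : ℚ_[p]) / α := rfl
  obtain ⟨u, hu⟩ :=
    exists_unit_sq_eq_of_norm_sub_one_lt hp (c := 1 + d) (by rwa [add_sub_cancel_left])
  refine ⟨u, ?_⟩
  rw [hu]
  apply Subtype.ext
  push_cast [hd_coe]
  field_simp
  ring

end PadicInt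

theorem stmt_3_general {p : ℕ} [Fact p.Prime] (hp : Odd p) (α α' : ℤ_[p])
    (hα : α ≠ 0) (hα' : α' ≠ 0)
    (hα'p : (p : ℤ_[p]) ∣ α')
    (h : ‖((α : ℚ_[p]))⁻¹ - ((α' : ℚ_[p]))⁻¹‖ ≤ 1) :
    ∃ u : ℤ_[p]ˣ, α' = α * (u : ℤ_[p]) ^ 2 := by
  refine PadicInt.exists_unit_sq_mul_of_norm_sub_lt hp ?_
  have hα₀ : (α : ℚ_[p]) ≠ 0 := PadicInt.coe_ne_zero.mpr hα
  have hα'₀ : (α' : ℚ_[p]) ≠ 0 := PadicInt.coe_ne_zero.mpr hα'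
  have hα_pos : 0 < ‖α‖ := norm_pos_iff.mpr hα
  have hα'_lt : ‖α'‖ < 1 := (PadicInt.norm_lt_one_iff_dvd α').mpr hα'p
  rw [← dist_eq_norm, dist_inv_inv₀ hα₀ hα'₀,
    div_le_one (mul_pos (norm_pos_iff.mpr hα₀) (norm_pos_iff.mpr hα'₀))] at h
  calc ‖α' - α‖ = dist α α' := by rw [dist_comm, dist_eq_norm]
    _ ≤ ‖α‖ * ‖α'‖ := h
    _ < ‖α‖ := mul_lt_of_lt_one_right hα_pos hα'_lt

/-- Let `p` be an odd prime and `α, α' ∈ pℤ_p` nonzero with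
`α⁻¹ - (α')⁻¹ ∈ ℤ_p` (inverses in `ℚ_p`). Then `α' = α u²` for some unit `u ∈ ℤ_p^×`. -/
theorem stmt_3 {p : ℕ} [Fact p.Prime] (hp : Odd p) (α α' : ℤ_[p])
    (hα : α ≠ 0) (hα' : α' ≠ 0)
    (hαp : (p : ℤ_[p]) ∣ α) (hα'p : (p : ℤ_[p]) ∣ α')
    (h : ‖((α : ℚ_[p]))⁻¹ - ((α' : ℚ_[p]))⁻¹‖ ≤ 1) :
    ∃ u : ℤ_[p]ˣ, α' = α * (u : ℤ_[p]) ^ 2 :=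
  stmt_3_general hp α α' hα hα' hα'p h
end

section
/- Let M' ∈ Sym_2(ℤ_2) be nonsingular such that every entry of (M')⁻¹ − [[0, 1/4],[1/4, 0]] lies in ℤ_2 (the inverse taken over ℚ_2). Then M' is congruent under GL_2(ℤ_2) to [[0, 4],[4, 0]]. -/
open Matrix MeasureTheory

/-!
Write `N = M'⁻¹ = [[a, 1/4 + b], [1/4 + b, d]]` with `a, b, d ∈ ℤ_2`, so that
`16 N = 4 [[4a, e], [e, 4d]]` with `e = 1 + 4b` a unit. An integral form `[[2a', e], [e, 2d']]`
with `e` a unit and `a'd'` a non-unit is equivalent to the hyperbolic plane `[[0, 1], [1, 0]]`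
via the basis change `[[x, d'], [r, 1]]`, where `x` is the root of `x² - e x + a'd'` near `e`
given by Hensel's lemma and `r = a'/x`. Hence `Uᵀ [[0,4],[4,0]] U = 16 N` for some
`U ∈ GL_2(ℤ_2)`, and since `[[0,4],[4,0]]² = 16`, inverting gives `U M' Uᵀ = [[0,4],[4,0]]`.
-/

theorem Matrix.mul_mul_transpose_eq_of_transpose_mul_mul_eq_smul {R n : Type*} [CommRing R]
    [Fintype n] [DecidableEq n] {A M N U : Matrix n n R} {c : R} (hc : IsUnit c)
    (hNM : N * M = 1) (hA : A * A = c • 1) (hU : Uᵀ * A * U = c • N) : U * M * Uᵀ = A := by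
  obtain ⟨c', hc'⟩ := hc.exists_left_inv
  have hAinv : A * (c' • A) = 1 := by rw [mul_smul_comm, hA, smul_smul, hc', one_smul]
  have hUMA : U * M * Uᵀ * A = c • 1 := by
    have h : (c' • (Uᵀ * A)) * (U * M) = 1 := by
      rw [smul_mul_assoc, ← mul_assoc, hU, smul_mul_assoc, hNM, smul_smul, hc', one_smul]
    replace h := mul_eq_one_comm.mp h
    rw [mul_smul_comm] at h
    rw [mul_assoc, ← h, smul_smul, mul_comm, hc', one_smul]
  calc U * M * Uᵀ = U * M * Uᵀ * A * (c' • A) := by rw [mul_assoc _ A, hAinv, mul_one]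
    _ = A := by rw [hUMA, ← hA, mul_assoc, hAinv, mul_one]

namespace PadicInt

open Polynomial

variable {p : ℕ} [Fact p.Prime]

theorem isUnit_add_of_norm_lt_one {u m : ℤ_[p]} (hu : IsUnit u) (hm : ‖m‖ < 1) :
    IsUnit (u + m) := by
  rw [isUnit_iff] at hu ⊢
  rw [IsUltrametricDist.norm_add_eq_max_of_norm_ne_norm (by linarith), hu, max_eq_left hm.le]

theorem exists_isUnit_root_quadratic {e c : ℤ_[p]} (he : IsUnit e) (hc : ‖c‖ < 1) :
    ∃ x : ℤ_[p], IsUnit x ∧ x ^ 2 - e * x + c = 0 := by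
  set F : ℤ_[p][X] := X ^ 2 - C e * X + C c
  have hFe : F.aeval e = c := by simp [F]; ring
  have hF'e : F.derivative.aeval e = e := by simp [F]; ring
  have he1 : ‖e‖ = 1 := isUnit_iff.mp he
  obtain ⟨x, hx, hxe, -⟩ := hensels_lemma (F := F) (a := e) (by rw [hFe, hF'e, he1]; simpa)
  rw [hF'e, he1] at hxe
  exact ⟨x, by simpa using isUnit_add_of_norm_lt_one he hxe, by simpa [F] using hx⟩

theorem exists_transpose_mul_hyperbolic_mul_eq {a d e : ℤ_[p]} (he : IsUnit e)
    (had : ‖a * d‖ < 1) :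
    ∃ U : (Matrix (Fin 2) (Fin 2) ℤ_[p])ˣ,
      (U : Matrix (Fin 2) (Fin 2) ℤ_[p])ᵀ * !![0, 1; 1, 0] *
        (U : Matrix (Fin 2) (Fin 2) ℤ_[p]) = !![2 * a, e; e, 2 * d] := by
  obtain ⟨x, hx, hroot⟩ := exists_isUnit_root_quadratic he had
  obtain ⟨r, hxr⟩ : ∃ r, x * r = a :=
    ⟨a * ↑hx.unit⁻¹, by rw [mul_left_comm, hx.mul_val_inv, mul_one]⟩
  have hxdr : x + d * r = e := by
    apply mul_left_cancel₀ hx.ne_zero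
    linear_combination d * hxr + hroot
  have hdet : IsUnit (x - d * r) := by
    have hsq : (x - d * r) ^ 2 = e ^ 2 + -(4 * (a * d)) := by
      linear_combination (x + d * r + e) * hxdr - 4 * d * hxr
    have hnorm : ‖-(4 * (a * d))‖ < 1 := by
      rw [norm_neg]
      exact (norm_mul_le_of_le (norm_le_one 4) le_rfl).trans_lt (by simpa using had)
    rw [← isUnit_pow_iff two_ne_zero, hsq]
    exact isUnit_add_of_norm_lt_one (he.pow 2) hnorm
  have hU : IsUnit !![x, d; r, 1] := by
    rwa [isUnit_iff_isUnit_det, det_fin_two_of, mul_one]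
  refine ⟨hU.unit, ?_⟩
  rw [hU.unit_spec]
  ext i j
  fin_cases i <;> fin_cases j <;> simp [mul_apply, Fin.sum_univ_two]
  · linear_combination 2 * hxr
  · linear_combination hxdr
  · linear_combination hxdr
  · ring

end PadicInt

theorem exists_transpose_mul_mul_eq_sixteen_smul {N : Matrix (Fin 2) (Fin 2) ℚ_[2]}
    (hN : N.IsSymm)
    (h : ∀ i j, ‖(N - (!![0, 1 / 4; 1 / 4, 0] : Matrix (Fin 2) (Fin 2) ℚ_[2])) i j‖ ≤ 1) :
    ∃ U : (Matrix (Fin 2) (Fin 2) ℤ_[2])ˣ,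
      ((U : Matrix (Fin 2) (Fin 2) ℤ_[2]).map PadicInt.Coe.ringHom)ᵀ * !![0, 4; 4, 0] *
        (U : Matrix (Fin 2) (Fin 2) ℤ_[2]).map PadicInt.Coe.ringHom = (16 : ℚ_[2]) • N := by
  set φ : ℤ_[2] →+* ℚ_[2] := PadicInt.Coe.ringHom
  set B : Matrix (Fin 2) (Fin 2) ℚ_[2] := !![0, 1 / 4; 1 / 4, 0]
  set Z : Matrix (Fin 2) (Fin 2) ℤ_[2] := fun i j => ⟨(N - B) i j, h i j⟩
  have hZ (i j) : φ (Z i j) = (N - B) i j := rfl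
  have hdvd (w : ℤ_[2]) : ‖2 * w‖ < 1 :=
    (PadicInt.norm_lt_one_iff_dvd _).mpr (by exact_mod_cast dvd_mul_right 2 w)
  obtain ⟨U, hU⟩ := PadicInt.exists_transpose_mul_hyperbolic_mul_eq
    (a := 2 * Z 0 0) (d := 2 * Z 1 1) (e := 1 + 4 * Z 0 1)
    (PadicInt.isUnit_add_of_norm_lt_one isUnit_one (by convert hdvd (2 * Z 0 1) using 2; ring))
    (by convert hdvd (Z 0 0 * (2 * Z 1 1)) using 2; ring)
  refine ⟨U, ?_⟩
  have hUq := congrArg φ.mapMatrix hU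
  simp only [map_mul, RingHom.mapMatrix_apply, transpose_map] at hUq
  have hA : !![0, 4; 4, 0] = (4 : ℚ_[2]) • !![0, 1; 1, 0].map φ := by
    ext i j; fin_cases i <;> fin_cases j <;> simp
  rw [hA, mul_smul_comm, smul_mul_assoc, hUq]
  ext i j; fin_cases i <;> fin_cases j <;> simp [hZ, hN.apply 0 1, B, map_ofNat φ] <;> ring

/-- Let `M' ∈ Sym_2(ℤ_2)` be nonsingular with every entry of
`(M')⁻¹ - [[0,1/4],[1/4,0]]` in `ℤ_2` (inverse over `ℚ_2`). Then `M'` is congruent under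
`GL_2(ℤ_2)` to `[[0,4],[4,0]]`. -/
theorem stmt_7 (M' : Matrix (Fin 2) (Fin 2) ℤ_[2]) (hs : M'.IsSymm) (hd : M'.det ≠ 0)
    (h : ∀ i j, ‖((M'.map (fun a => (a : ℚ_[2])))⁻¹ -
      (!![0, 1 / 4; 1 / 4, 0] : Matrix (Fin 2) (Fin 2) ℚ_[2])) i j‖ ≤ 1) :
    M'.Congruent !![0, 4; 4, 0] := by
  set φ : ℤ_[2] →+* ℚ_[2] := PadicInt.Coe.ringHom
  have hNM : (M'.map φ)⁻¹ * M'.map φ = 1 := by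
    refine nonsing_inv_mul _ ?_
    rw [show (M'.map φ).det = φ M'.det from (φ.map_det M').symm]
    exact isUnit_iff_ne_zero.mpr (PadicInt.coe_ne_zero.mpr hd)
  obtain ⟨U, hU⟩ := exists_transpose_mul_mul_eq_sixteen_smul (hs.map φ).inv h
  have hA : (!![0, 4; 4, 0] : Matrix (Fin 2) (Fin 2) ℤ_[2]).map φ = !![0, 4; 4, 0] := by
    ext i j; fin_cases i <;> fin_cases j <;> simp [map_ofNat φ]
  have hA2 : (!![0, 4; 4, 0] : Matrix (Fin 2) (Fin 2) ℚ_[2]) * !![0, 4; 4, 0] =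
      (16 : ℚ_[2]) • 1 := by
    rw [mul_fin_two, one_fin_two, smul_of]; norm_num
  refine ⟨U, map_injective (f := φ) Subtype.coe_injective ?_⟩
  show φ.mapMatrix _ = φ.mapMatrix _
  simp only [map_mul, RingHom.mapMatrix_apply, transpose_map, hA]
  exact mul_mul_transpose_eq_of_transpose_mul_mul_eq_smul (by norm_num) hNM hA2 hU
end

section
/- Let M' ∈ Sym_2(ℤ_2) be nonsingular such that every entry of (M')⁻¹ − [[1/6, −1/12],[−1/12, 1/6]] lies in ℤ_2 (the inverse taken over ℚ_2; note [[1/6,−1/12],[−1/12,1/6]] is the inverse of [[8,4],[4,8]]). Then M' is congruent under GL_2(ℤ_2) to [[8, 4],[4, 8]]. -/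
open Matrix MeasureTheory

/-!
Write `N = [[8,4],[4,8]] = 4E` with `E = [[2,1],[1,2]]`. The hypothesis says `M'⁻¹ = N⁻¹ + A` with
`A` integral, i.e. `M' (1 + A N) = N`; substituting this identity into itself once shows
`M' ≡ N (mod 16)`, so `M' = 4G` with `G = [[2a,b],[b,2c]]` and `a, b, c` odd. Such a `G` is congruent
to `E`: Hensel's lemma gives a vector on which `a x² + b x y + c y²` takes the value `1`, which
completes to a basis in which `G` becomes `[[2,1],[1,2s]]` with `s` odd, and a second application of
Hensel's lemma finds in `E` a basis with that Gram matrix.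
-/

open Polynomial

namespace Matrix

theorem congruent_fin_two_of {R : Type*} [CommRing R] {a b d a' b' d' x₁ y₁ x₂ y₂ : R}
    (hU : IsUnit (x₁ * y₂ - y₁ * x₂)) (h₁ : a * x₁ ^ 2 + 2 * b * x₁ * y₁ + d * y₁ ^ 2 = a')
    (h₂ : a * x₁ * x₂ + b * (x₁ * y₂ + y₁ * x₂) + d * y₁ * y₂ = b')
    (h₃ : a * x₂ ^ 2 + 2 * b * x₂ * y₂ + d * y₂ ^ 2 = d') :
    !![a, b; b, d].Congruent !![a', b'; b', d'] := by
  refine ⟨((isUnit_iff_isUnit_det !![x₁, y₁; x₂, y₂]).mpr (by rwa [det_fin_two_of])).unit, ?_⟩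
  subst h₁ h₂ h₃
  ext i j
  fin_cases i <;> fin_cases j <;> simp [Matrix.mul_apply] <;> ring

namespace Congruent

variable {R : Type*} [CommRing R] {ι : Type*} [Fintype ι] [DecidableEq ι] {A B C : Matrix ι ι R}

theorem symm_s8 (h : A.Congruent B) : B.Congruent A := by
  obtain ⟨U, rfl⟩ := h
  refine ⟨U⁻¹, ?_⟩
  calc (↑U⁻¹ : Matrix ι ι R) * (U * A * (U : Matrix ι ι R)ᵀ) * (↑U⁻¹ : Matrix ι ι R)ᵀ
      = ↑(U⁻¹ * U) * A * (↑(U⁻¹ * U) : Matrix ι ι R)ᵀ := by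
        simp only [Units.val_mul, transpose_mul, Matrix.mul_assoc]
    _ = A := by simp

theorem trans (h₁ : A.Congruent B) (h₂ : B.Congruent C) : A.Congruent C := by
  obtain ⟨U, rfl⟩ := h₁
  obtain ⟨V, rfl⟩ := h₂
  refine ⟨V * U, ?_⟩
  simp only [Units.val_mul, transpose_mul, Matrix.mul_assoc]

theorem smul (h : A.Congruent B) (c : R) : (c • A).Congruent (c • B) := by
  obtain ⟨U, rfl⟩ := h
  exact ⟨U, by rw [Matrix.mul_smul, Matrix.smul_mul]⟩

end Congruent

end Matrix

theorem eq_smul_add_of_mul_one_add_mul_smul_eq {S R : Type*} [CommSemiring S] [Ring R]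
    [Algebra S R] {m a e : R} (k : S) (h : m * (1 + a * (k • e)) = k • e) :
    m = k • (e + k • ((m * a * e - e) * a * e)) := by
  have hm : m = k • e - k • (m * a * e) := by
    rw [eq_sub_iff_add_eq, ← h, mul_add, mul_one, mul_smul_comm, mul_smul_comm, ← mul_assoc]
  have hmae : m * a * e = k • (e * a * e) - k • (m * a * e * a * e) := by
    conv_lhs => rw [hm]
    simp only [sub_mul, smul_mul_assoc, mul_assoc]
  calc m = k • e - k • (m * a * e) := hm
    _ = k • e - k • (k • (e * a * e) - k • (m * a * e * a * e)) := by rw [← hmae]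
    _ = k • (e + k • ((m * a * e - e) * a * e)) := by
      simp only [sub_mul, smul_sub, smul_add]
      abel

namespace PadicInt

section

variable {p : ℕ} [Fact p.Prime]

@[simp, norm_cast]
theorem coe_ofNat (n : ℕ) [n.AtLeastTwo] : ((ofNat(n) : ℤ_[p]) : ℚ_[p]) = ofNat(n) :=
  rfl

theorem toZMod_eq_zero_iff_norm_lt_one {x : ℤ_[p]} : toZMod x = 0 ↔ ‖x‖ < 1 := by
  rw [← RingHom.mem_ker, ker_toZMod, IsLocalRing.mem_maximalIdeal, mem_nonunits]

theorem toZMod_ne_zero_iff_norm_eq_one {x : ℤ_[p]} : toZMod x ≠ 0 ↔ ‖x‖ = 1 := by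
  rw [Ne, toZMod_eq_zero_iff_norm_lt_one, not_lt]
  exact ⟨(norm_le_one x).antisymm, ge_of_eq⟩

theorem isUnit_iff_toZMod_ne_zero {x : ℤ_[p]} : IsUnit x ↔ toZMod x ≠ 0 := by
  rw [isUnit_iff, toZMod_ne_zero_iff_norm_eq_one]

theorem dvd_of_toZMod_eq_zero {x : ℤ_[p]} (hx : toZMod x = 0) : (p : ℤ_[p]) ∣ x :=
  (norm_lt_one_iff_dvd x).mp (toZMod_eq_zero_iff_norm_lt_one.mp hx)

theorem exists_eval_eq_zero_of_toZMod (F : ℤ_[p][X]) (a : ℤ_[p])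
    (hroot : toZMod (F.eval a) = 0) (hsimple : toZMod (F.derivative.eval a) ≠ 0) :
    ∃ z, F.eval z = 0 := by
  have hnorm : ‖F.aeval a‖ < ‖F.derivative.aeval a‖ ^ 2 := by
    rw [coe_aeval_eq_eval, toZMod_ne_zero_iff_norm_eq_one.mp hsimple, one_pow]
    exact toZMod_eq_zero_iff_norm_lt_one.mp hroot
  obtain ⟨z, hz, -⟩ := hensels_lemma hnorm
  exact ⟨z, by rwa [coe_aeval_eq_eval] at hz⟩

theorem exists_matrix_map_coe_eq {m n : Type*} (B : Matrix m n ℚ_[p])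
    (hB : ∀ i j, ‖B i j‖ ≤ 1) : ∃ A : Matrix m n ℤ_[p], A.map (fun a => (a : ℚ_[p])) = B :=
  ⟨Matrix.of fun i j => ⟨B i j, hB i j⟩, rfl⟩

theorem mul_one_add_mul_eq_of_inv_eq {n : Type*} [Fintype n] [DecidableEq n]
    {M N A : Matrix n n ℤ_[p]} {Q : Matrix n n ℚ_[p]} (hM : M.det ≠ 0)
    (hQ : Q * N.map (fun a => (a : ℚ_[p])) = 1)
    (hA : A.map (fun a => (a : ℚ_[p])) = (M.map (fun a => (a : ℚ_[p])))⁻¹ - Q) :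
    M * (1 + A * N) = N := by
  let f : ℤ_[p] →+* ℚ_[p] := Coe.ringHom
  change Q * N.map f = 1 at hQ
  change A.map f = (M.map f)⁻¹ - Q at hA
  have hMf : IsUnit (M.map f).det := by
    rw [← RingHom.mapMatrix_apply, ← RingHom.map_det]
    exact isUnit_iff_ne_zero.mpr (coe_ne_zero.mpr hM)
  apply Matrix.map_injective (f := f) Subtype.coe_injective
  change f.mapMatrix (M * (1 + A * N)) = f.mapMatrix N
  simp only [map_mul, map_add, map_one, RingHom.mapMatrix_apply]
  rw [hA, sub_mul, hQ, add_sub_cancel, ← Matrix.mul_assoc, Matrix.mul_nonsing_inv _ hMf,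
    Matrix.one_mul]

end

theorem toZMod_one_add_two_mul (y : ℤ_[2]) : toZMod (1 + 2 * y) = 1 := by
  simp [map_ofNat, CharTwo.two_eq_zero]

theorem congruent_two_one_one_two_mul (s : ℤ_[2]) (hs : toZMod s = 1) :
    !![2, 1; 1, 2 * s].Congruent !![2, 1; 1, 2] := by
  -- `(x, 1 - 2x)` pairs to `1` with `(1, 0)` under `E`, and `E` takes the value `2 (3x² - 3x + 1)` on it.
  obtain ⟨x, hx⟩ := exists_eval_eq_zero_of_toZMod (C 3 * X ^ 2 - C 3 * X + C (1 - s)) 0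
    (by simp [hs]) (by simp +decide [map_ofNat])
  replace hx : 3 * x ^ 2 - 3 * x + (1 - s) = 0 := by simpa using hx
  refine (Matrix.congruent_fin_two_of (x₁ := 1) (y₁ := 0) (x₂ := x) (y₂ := 1 - 2 * x) ?_
    (by ring) (by ring) (by linear_combination 2 * hx)).symm_s8
  rw [isUnit_iff_toZMod_ne_zero]
  simp [map_ofNat, CharTwo.two_eq_zero]

theorem exists_congruent_two_one_one_two_mul (a b c : ℤ_[2]) (ha : toZMod a = 1)
    (hb : toZMod b = 1) (hc : toZMod c = 1) :
    ∃ s, toZMod s = 1 ∧ !![2 * a, b; b, 2 * c].Congruent !![2, 1; 1, 2 * s] := by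
  obtain ⟨x, hx⟩ := exists_eval_eq_zero_of_toZMod (C a * X ^ 2 + C b * X + C (c - 1)) 0
    (by simp [hc]) (by simp [hb])
  replace hx : a * x ^ 2 + b * x + (c - 1) = 0 := by simpa using hx
  obtain ⟨t, ht⟩ : ((2 : ℕ) : ℤ_[2]) ∣ 1 - b - 2 * a * x :=
    dvd_of_toZMod_eq_zero (by simp [hb, map_ofNat, CharTwo.two_eq_zero])
  push_cast at ht
  have hodd : ∀ t x : ZMod 2, (1 + t * x) ^ 2 + t * (1 + t * x) + t ^ 2 = 1 := by decide
  refine ⟨a * (1 + t * x) ^ 2 + b * t * (1 + t * x) + c * t ^ 2,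
    by simpa [ha, hb, hc] using hodd (toZMod t) (toZMod x),
    Matrix.congruent_fin_two_of (x₁ := x) (y₁ := 1) (x₂ := 1 + t * x) (y₂ := t) ?_
      (by linear_combination 2 * hx) (by linear_combination 2 * t * hx - ht) (by ring)⟩
  rw [show x * t - 1 * (1 + t * x) = -1 by ring]
  exact isUnit_neg_one

theorem congruent_two_one_one_two (a b c : ℤ_[2]) (ha : toZMod a = 1) (hb : toZMod b = 1)
    (hc : toZMod c = 1) : !![2 * a, b; b, 2 * c].Congruent !![2, 1; 1, 2] :=
  let ⟨s, hs, h⟩ := exists_congruent_two_one_one_two_mul a b c ha hb hc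
  h.trans (congruent_two_one_one_two_mul s hs)

theorem congruent_smul_of_eq_smul_add (M Y : Matrix (Fin 2) (Fin 2) ℤ_[2]) (hs : M.IsSymm)
    (hM : M = (4 : ℤ_[2]) • (!![2, 1; 1, 2] + (4 : ℤ_[2]) • Y)) :
    M.Congruent ((4 : ℤ_[2]) • !![2, 1; 1, 2]) := by
  have hM' : M = (4 : ℤ_[2]) • !![2 * (1 + 2 * Y 0 0), 1 + 2 * (2 * Y 0 1);
      1 + 2 * (2 * Y 0 1), 2 * (1 + 2 * Y 1 1)] := by
    rw [← Matrix.ext_iff]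
    simp only [Fin.forall_fin_two, hs.apply 0 1]
    norm_num [hM, mul_add, ← mul_assoc]
  rw [hM']
  exact (congruent_two_one_one_two _ _ _ (toZMod_one_add_two_mul _) (toZMod_one_add_two_mul _)
    (toZMod_one_add_two_mul _)).smul 4

end PadicInt

/-- Let `M' ∈ Sym_2(ℤ_2)` be nonsingular with every entry of
`(M')⁻¹ - [[1/6,-1/12],[-1/12,1/6]]` in `ℤ_2` (inverse over `ℚ_2`). Then `M'` is congruent
under `GL_2(ℤ_2)` to `[[8,4],[4,8]]`. -/
theorem stmt_8 (M' : Matrix (Fin 2) (Fin 2) ℤ_[2]) (hs : M'.IsSymm) (hd : M'.det ≠ 0)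
    (h : ∀ i j, ‖((M'.map (fun a => (a : ℚ_[2])))⁻¹ -
      (!![1 / 6, -(1 / 12); -(1 / 12), 1 / 6] : Matrix (Fin 2) (Fin 2) ℚ_[2])) i j‖ ≤ 1) :
    M'.Congruent !![8, 4; 4, 8] := by
  obtain ⟨A, hA⟩ := PadicInt.exists_matrix_map_coe_eq _ h
  have hQ : (!![1 / 6, -(1 / 12); -(1 / 12), 1 / 6] : Matrix (Fin 2) (Fin 2) ℚ_[2]) *
      (!![8, 4; 4, 8] : Matrix (Fin 2) (Fin 2) ℤ_[2]).map (fun a => (a : ℚ_[2])) = 1 := by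
    rw [← Matrix.ext_iff]
    norm_num [Matrix.mul_apply, Fin.forall_fin_two]
  have hN : (!![8, 4; 4, 8] : Matrix (Fin 2) (Fin 2) ℤ_[2]) = (4 : ℤ_[2]) • !![2, 1; 1, 2] := by
    norm_num [← Matrix.ext_iff, Fin.forall_fin_two]
  have key := PadicInt.mul_one_add_mul_eq_of_inv_eq hd hQ hA
  rw [hN] at key ⊢
  exact PadicInt.congruent_smul_of_eq_smul_add M' _ hs
    (eq_smul_add_of_mul_one_add_mul_smul_eq 4 key)
end

section
/- Let n ≥ 1 and d ≥ 3 be integers, and let M, M' ∈ Sym_n(ℤ_2) be nonsingular. Suppose that the matrix 2^d M⁻¹ (inverse taken over ℚ_2) has all entries in ℤ_2 and lies in GL_n(ℤ_2), and that every entry of M⁻¹ − (M')⁻¹ lies in ℤ_2. Then M and M' are congruent under GL_n(ℤ_2). -/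
open Matrix MeasureTheory

/-! Write `N = 2^d M⁻¹ ∈ GL_n(ℤ_2)`; then `M = 2^d N⁻¹`, and likewise `M' = 2^d N'⁻¹` with
`N' = N - 2^d (M⁻¹ - M'⁻¹) ≡ N (mod 2^d)`, so `N'` is unimodular too. Hence `C = N⁻¹` and
`C' = N'⁻¹` are symmetric unimodular with `C' ≡ C (mod 2^d)`, and it suffices to show that they are
congruent. This is a Hensel argument: an approximate solution `U C Uᵀ ≡ C' (mod 2^m)` with
`U ≡ 1 (mod 2)` and `m ≥ 3` can be improved to one modulo `2^(m+1)`, and compactness of the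
matrices over `ℤ_2` turns the approximate solutions of all levels into an exact one. -/

open IsLocalRing

theorem PadicInt.eq_zero_of_forall_pow_dvd {p : ℕ} [Fact p.Prime] {x : ℤ_[p]}
    (h : ∀ n, (p : ℤ_[p]) ^ n ∣ x) : x = 0 := by
  by_contra hx
  obtain ⟨c, hc⟩ := h (x.valuation + 1)
  have hc0 : c ≠ 0 := by rintro rfl; exact hx (by rw [hc, mul_zero])
  have := congrArg valuation hc
  rw [valuation_p_pow_mul _ _ hc0] at this
  omega

namespace Matrix

instance compactSpace {m n R : Type*} [TopologicalSpace R] [CompactSpace R] :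
    CompactSpace (Matrix m n R) :=
  Pi.compactSpace

theorem IsSymm.of_smul {ι R : Type*} [CommRing R] [NoZeroDivisors R] {A : Matrix ι ι R}
    {c : R} (hc : c ≠ 0) (h : (c • A).IsSymm) : A.IsSymm := by
  ext i j
  exact mul_left_cancel₀ hc (congr_fun₂ h i j)

variable {ι : Type*} [Fintype ι] [DecidableEq ι]

theorem Congruent.smul_s9 {R : Type*} [CommRing R] {A B : Matrix ι ι R} (h : A.Congruent B) (c : R) :
    (c • A).Congruent (c • B) := by
  obtain ⟨U, hU⟩ := h
  exact ⟨U, by rw [Matrix.mul_smul, smul_mul, hU]⟩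

theorem eq_smul_nonsing_inv_of_mul_eq_smul_one {R : Type*} [CommRing R] {X Y : Matrix ι ι R}
    {c : R} (hY : IsUnit Y.det) (h : X * Y = c • 1) : X = c • Y⁻¹ := by
  rw [← mul_nonsing_inv_cancel_right Y X hY, h, smul_mul, one_mul]

theorem mul_eq_smul_one_of_map_eq_smul_inv {R K : Type*} [CommRing R] [Field K] {f : R →+* K}
    (hf : Function.Injective f) {M N : Matrix ι ι R} (hM : M.det ≠ 0) {c : R}
    (h : N.map f = f c • (M.map f)⁻¹) : M * N = c • 1 := by
  have hMf : IsUnit (M.map f).det := by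
    rw [isUnit_iff_ne_zero, ← RingHom.mapMatrix_apply, ← RingHom.map_det]
    exact (map_ne_zero_iff f hf).mpr hM
  apply map_injective hf
  change (M * N).map f = (c • (1 : Matrix ι ι R)).map f
  rw [← RingHom.mapMatrix_apply, map_mul, RingHom.mapMatrix_apply, RingHom.mapMatrix_apply, h,
    Matrix.mul_smul, mul_nonsing_inv _ hMf, map_smul' _ _ _ (map_mul f),
    Matrix.map_one _ (map_zero f) (map_one f)]

theorem isUnit_det_of_sub_mem_maximalIdeal {R : Type*} [CommRing R] [IsLocalRing R]
    {X Y : Matrix ι ι R} (h : ∀ i j, (X - Y) i j ∈ maximalIdeal R) (hY : IsUnit Y.det) :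
    IsUnit X.det := by
  have hres : (residue R).mapMatrix X = (residue R).mapMatrix Y := by
    ext i j
    rw [RingHom.mapMatrix_apply, RingHom.mapMatrix_apply, map_apply, map_apply, ← sub_eq_zero,
      ← map_sub, residue_eq_zero_iff]
    exact h i j
  apply isUnit_of_map_unit (residue R)
  rw [RingHom.map_det, hres, ← RingHom.map_det]
  exact hY.map _

theorem isUnit_det_one_add_two_smul (Y : Matrix ι ι ℤ_[2]) :
    IsUnit (1 + (2 : ℤ_[2]) • Y).det := by
  refine isUnit_det_of_sub_mem_maximalIdeal (Y := 1) (fun i j => ?_) (by simp)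
  rw [add_sub_cancel_left, smul_apply, PadicInt.maximalIdeal_eq_span_p, Ideal.mem_span_singleton]
  exact_mod_cast dvd_mul_right 2 (Y i j)

theorem IsSymm.conj_one_add_smul_mul_inv {R : Type*} [CommRing R] {S T : Matrix ι ι R}
    (hS : S.IsSymm) (hSu : IsUnit S.det) (hT : T.IsSymm) (c : R) :
    (1 + c • (T * S⁻¹)) * S * (1 + c • (T * S⁻¹))ᵀ =
      S + (2 * c) • T + c ^ 2 • (T * S⁻¹ * T) := by
  have hXt : (T * S⁻¹)ᵀ = S⁻¹ * T := by
    rw [transpose_mul, transpose_nonsing_inv, hS.eq, hT.eq]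
  rw [transpose_add, transpose_one, transpose_smul, hXt]
  simp only [add_mul, mul_add, one_mul, mul_one, Matrix.smul_mul, Matrix.mul_smul, smul_smul,
    mul_assoc, nonsing_inv_mul _ hSu, mul_nonsing_inv_cancel_left _ _ hSu]
  module

section Hensel

/-- `U ≡ 1 (mod 2)` and `U C Uᵀ ≡ C' (mod 2 ^ m)`, with both congruences written as ranges of
continuous maps on the compact space of matrices, so that the set is visibly closed. -/
def congrApprox (C C' : Matrix ι ι ℤ_[2]) (m : ℕ) : Set (Matrix ι ι ℤ_[2]) :=
  Set.range (fun Y => 1 + (2 : ℤ_[2]) • Y) ∩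
    (fun U => U * C * Uᵀ) ⁻¹' Set.range (fun T => C' - (2 : ℤ_[2]) ^ m • T)

variable {C C' : Matrix ι ι ℤ_[2]}

theorem isClosed_congrApprox (m : ℕ) : IsClosed (congrApprox C C' m) := by
  refine IsClosed.inter ?_ (IsClosed.preimage (by fun_prop) ?_) <;>
    exact (isCompact_range (by fun_prop)).isClosed

theorem congrApprox_succ_subset (m : ℕ) : congrApprox C C' (m + 1) ⊆ congrApprox C C' m := by
  rintro U ⟨hU, T, hT⟩
  exact ⟨hU, (2 : ℤ_[2]) • T, by simpa only [smul_smul, ← pow_succ] using hT⟩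

/- With `S = U C Uᵀ = C' - 2^m T`, the correction `V = 1 + 2^(m-1) T S⁻¹` gives
`V S Vᵀ = C' + 2^(2m-2) T S⁻¹ T`, and `2m - 2 ≥ m + 1` as `m ≥ 3`. -/
theorem congrApprox_succ_nonempty (hC : C.IsSymm) (hCu : IsUnit C.det) (hC' : C'.IsSymm) {k : ℕ}
    (h : (congrApprox C C' (k + 3)).Nonempty) : (congrApprox C C' (k + 4)).Nonempty := by
  obtain ⟨_, ⟨Y, rfl⟩, T, hT⟩ := h
  set U := 1 + (2 : ℤ_[2]) • Y
  set S := U * C * Uᵀ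
  replace hT : C' = S + (2 : ℤ_[2]) ^ (k + 3) • T := sub_eq_iff_eq_add.mp hT
  have hS : S.IsSymm := by
    simp only [S, IsSymm, transpose_mul, transpose_transpose, hC.eq, mul_assoc]
  have hSu : IsUnit S.det := by
    simp only [S, det_mul, det_transpose]
    exact ((isUnit_det_one_add_two_smul Y).mul hCu).mul (isUnit_det_one_add_two_smul Y)
  have hTs : T.IsSymm := by
    refine IsSymm.of_smul (c := (2 : ℤ_[2]) ^ (k + 3)) (pow_ne_zero _ two_ne_zero) ?_
    simpa only [hT, add_sub_cancel_left] using hC'.sub hS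
  set V := 1 + (2 : ℤ_[2]) ^ (k + 2) • (T * S⁻¹)
  refine ⟨V * U, ⟨Y + (2 : ℤ_[2]) ^ (k + 1) • (T * S⁻¹ * U), ?_⟩,
    -((2 : ℤ_[2]) ^ k • (T * S⁻¹ * T)), ?_⟩
  · simp only [V, add_mul, one_mul, Matrix.smul_mul, U]
    module
  · have hconj : V * U * C * (V * U)ᵀ = V * S * Vᵀ := by
      simp only [S, transpose_mul, mul_assoc]
    have key : V * S * Vᵀ = _ := hS.conj_one_add_smul_mul_inv hSu hTs _
    change _ = V * U * C * (V * U)ᵀ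
    rw [hconj, key, hT]
    module

theorem congrApprox_nonempty (hC : C.IsSymm) (hCu : IsUnit C.det) (hC' : C'.IsSymm) {e : ℕ}
    (he : 3 ≤ e) {B : Matrix ι ι ℤ_[2]} (hB : C' = C + (2 : ℤ_[2]) ^ e • B) (m : ℕ) :
    (congrApprox C C' m).Nonempty := by
  have hge : ∀ m, e ≤ m → (congrApprox C C' m).Nonempty := by
    intro m hm
    induction m, hm using Nat.le_induction with
    | base => exact ⟨1, ⟨0, by simp⟩, B, by simp [hB]⟩
    | succ m hm ih =>
      obtain ⟨k, rfl⟩ : ∃ k, m = k + 3 := ⟨m - 3, by omega⟩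
      exact congrApprox_succ_nonempty hC hCu hC' ih
  exact (hge _ (le_max_right m e)).mono
    (antitone_nat_of_succ_le congrApprox_succ_subset (le_max_left m e))

theorem mul_mul_transpose_eq_of_mem_iInter_congrApprox {U : Matrix ι ι ℤ_[2]}
    (hU : U ∈ ⋂ m, congrApprox C C' m) : U * C * Uᵀ = C' := by
  ext i j
  rw [← sub_eq_zero, ← neg_eq_zero, neg_sub, ← sub_apply]
  refine PadicInt.eq_zero_of_forall_pow_dvd (p := 2) fun m => ?_
  obtain ⟨_, T, hT⟩ := Set.mem_iInter.mp hU m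
  rw [← show C' - (2 : ℤ_[2]) ^ m • T = U * C * Uᵀ from hT, sub_sub_cancel, smul_apply,
    Nat.cast_ofNat, smul_eq_mul]
  exact dvd_mul_right _ _

theorem congruent_of_eq_add_pow_smul (hC : C.IsSymm) (hCu : IsUnit C.det) (hC' : C'.IsSymm)
    {e : ℕ} (he : 3 ≤ e) {B : Matrix ι ι ℤ_[2]} (hB : C' = C + (2 : ℤ_[2]) ^ e • B) :
    C.Congruent C' := by
  obtain ⟨U, hU⟩ := IsCompact.nonempty_iInter_of_sequence_nonempty_isCompact_isClosed _
    congrApprox_succ_subset (congrApprox_nonempty hC hCu hC' he hB)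
    (isClosed_congrApprox 0).isCompact isClosed_congrApprox
  obtain ⟨⟨Y, hY⟩, -⟩ := Set.mem_iInter.mp hU 0
  have hUu : IsUnit U := by
    rw [isUnit_iff_isUnit_det, ← hY]
    exact isUnit_det_one_add_two_smul Y
  exact ⟨hUu.unit, mul_mul_transpose_eq_of_mem_iInter_congrApprox hU⟩

end Hensel

theorem congruent_of_mul_eq_pow_smul_one {M M' N A : Matrix ι ι ℤ_[2]} {d : ℕ} (hd : 3 ≤ d)
    (hM : M.IsSymm) (hM' : M'.IsSymm) (hN : IsUnit N.det) (hMN : M * N = (2 : ℤ_[2]) ^ d • 1)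
    (hM'N' : M' * (N - (2 : ℤ_[2]) ^ d • A) = (2 : ℤ_[2]) ^ d • 1) : M.Congruent M' := by
  set N' := N - (2 : ℤ_[2]) ^ d • A
  have hN' : IsUnit N'.det := by
    refine isUnit_det_of_sub_mem_maximalIdeal (fun i j => ?_) hN
    rw [sub_sub_cancel_left, neg_apply, neg_mem_iff, smul_apply, smul_eq_mul,
      PadicInt.maximalIdeal_eq_span_p, Ideal.mem_span_singleton, Nat.cast_ofNat]
    exact (dvd_pow_self 2 (by omega)).mul_right _
  have h2d : (2 : ℤ_[2]) ^ d ≠ 0 := pow_ne_zero _ two_ne_zero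
  rw [eq_smul_nonsing_inv_of_mul_eq_smul_one hN hMN] at hM ⊢
  rw [eq_smul_nonsing_inv_of_mul_eq_smul_one hN' hM'N'] at hM' ⊢
  refine Congruent.smul_s9 (congruent_of_eq_add_pow_smul (hM.of_smul h2d) ?_ (hM'.of_smul h2d) hd
    (B := N'⁻¹ * A * N⁻¹) ?_) _
  · exact isUnit_nonsing_inv_det_iff.mpr hN
  · have : N'⁻¹ * (N - N') * N⁻¹ = N'⁻¹ - N⁻¹ := by
      rw [mul_sub, sub_mul, mul_nonsing_inv_cancel_right _ _ hN, nonsing_inv_mul _ hN', one_mul]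
    rw [← sub_eq_iff_eq_add', ← this, sub_sub_cancel, Matrix.mul_smul, smul_mul]

end Matrix

theorem stmt_9_general {n d : ℕ} (hd3 : 3 ≤ d)
    (M M' : Matrix (Fin n) (Fin n) ℤ_[2]) (hMs : M.IsSymm) (hM's : M'.IsSymm)
    (hMd : M.det ≠ 0) (hM'd : M'.det ≠ 0)
    (h1 : ∃ N : Matrix (Fin n) (Fin n) ℤ_[2],
      N.map (fun a => (a : ℚ_[2])) = (2 : ℚ_[2]) ^ d • (M.map (fun a => (a : ℚ_[2])))⁻¹ ∧
      IsUnit N.det)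
    (h2 : ∀ i j, ‖((M.map (fun a => (a : ℚ_[2])))⁻¹ - (M'.map (fun a => (a : ℚ_[2])))⁻¹) i j‖ ≤ 1) :
    M.Congruent M' := by
  obtain ⟨N, hN, hNu⟩ := h1
  let f : ℤ_[2] →+* ℚ_[2] := PadicInt.Coe.ringHom
  have hf : Function.Injective f := Subtype.coe_injective
  have hf2 : f ((2 : ℤ_[2]) ^ d) = (2 : ℚ_[2]) ^ d := by rw [map_pow, map_ofNat]
  replace hN : N.map f = (2 : ℚ_[2]) ^ d • (M.map f)⁻¹ := hN
  let A : Matrix (Fin n) (Fin n) ℤ_[2] := of fun i j => ⟨_, h2 i j⟩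
  refine congruent_of_mul_eq_pow_smul_one (A := A) hd3 hMs hM's hNu
    (mul_eq_smul_one_of_map_eq_smul_inv hf hMd (by rw [hf2, hN]))
    (mul_eq_smul_one_of_map_eq_smul_inv hf hM'd ?_)
  have hA : A.map f = (M.map f)⁻¹ - (M'.map f)⁻¹ := rfl
  rw [Matrix.map_sub _ (map_sub f), map_smul' _ _ _ (map_mul f), hA, hf2, hN, smul_sub,
    sub_sub_cancel]

/-- Let `n ≥ 1`, `d ≥ 3`, and let `M, M' ∈ Sym_n(ℤ_2)` be nonsingular. If
`2^d M⁻¹` (inverse over `ℚ_2`) has all entries in `ℤ_2` and lies in `GL_n(ℤ_2)`, and every entry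
of `M⁻¹ - (M')⁻¹` lies in `ℤ_2`, then `M` and `M'` are congruent under `GL_n(ℤ_2)`. -/
theorem stmt_9 {n d : ℕ} (hn : 1 ≤ n) (hd3 : 3 ≤ d)
    (M M' : Matrix (Fin n) (Fin n) ℤ_[2]) (hMs : M.IsSymm) (hM's : M'.IsSymm)
    (hMd : M.det ≠ 0) (hM'd : M'.det ≠ 0)
    (h1 : ∃ N : Matrix (Fin n) (Fin n) ℤ_[2],
      N.map (fun a => (a : ℚ_[2])) = (2 : ℚ_[2]) ^ d • (M.map (fun a => (a : ℚ_[2])))⁻¹ ∧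
      IsUnit N.det)
    (h2 : ∀ i j, ‖((M.map (fun a => (a : ℚ_[2])))⁻¹ - (M'.map (fun a => (a : ℚ_[2])))⁻¹) i j‖ ≤ 1) :
    M.Congruent M' :=
  stmt_9_general hd3 M M' hMs hM's hMd hM'd h1 h2
end

section
/- For all b₁, b₂, ξ ∈ ℤ_2, the matrix [[2 + 8b₁, 1 + 8ξ],[1 + 8ξ, 2 + 8b₂]] is congruent under GL_2(ℤ_2) to [[2, 1],[1, 2]]. -/
open Matrix MeasureTheory

/-! Shearing by `[[1, t], [0, 1]]` turns the corner `a` into `a + 2tc + t²d`; as `c` is odd and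
`a ≡ 2 (mod 8)`, Hensel's lemma finds `t` making it `2`. A second shear `[[1, 0], [s, 1]]`, again
chosen by Hensel's lemma, makes the other corner twice the square of the (still odd) off-diagonal
entry `c'`, and rescaling the second basis vector by `c'⁻¹` gives `[[2, 1], [1, 2]]`. -/

namespace Matrix

section Congruent

variable {R : Type*} [CommRing R] {ι : Type*} [Fintype ι] [DecidableEq ι]

theorem Congruent.of_isUnit_det {A B U : Matrix ι ι R} (hU : IsUnit U.det)
    (h : U * A * Uᵀ = B) : A.Congruent B :=
  ⟨((isUnit_iff_isUnit_det U).mpr hU).unit, h⟩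

theorem Congruent.trans_s11 {A B C : Matrix ι ι R} (hAB : A.Congruent B) (hBC : B.Congruent C) :
    A.Congruent C := by
  obtain ⟨U, rfl⟩ := hAB
  obtain ⟨V, rfl⟩ := hBC
  exact ⟨V * U, by simp only [Units.val_mul, transpose_mul, Matrix.mul_assoc]⟩

end Congruent

section FinTwo

variable {R : Type*} [CommRing R]

theorem congruent_upper_shear (a c d t : R) :
    !![a, c; c, d].Congruent !![a + 2 * t * c + t ^ 2 * d, c + t * d; c + t * d, d] :=
  .of_isUnit_det (U := !![1, t; 0, 1]) (by simp [det_fin_two_of]) <| by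
    ext i j
    fin_cases i <;> fin_cases j <;> simp [mul_apply, Fin.sum_univ_two] <;> ring

theorem congruent_lower_shear (a c d s : R) :
    !![a, c; c, d].Congruent !![a, c + a * s; c + a * s, d + 2 * s * c + a * s ^ 2] :=
  .of_isUnit_det (U := !![1, 0; s, 1]) (by simp [det_fin_two_of]) <| by
    ext i j
    fin_cases i <;> fin_cases j <;> simp [mul_apply, Fin.sum_univ_two] <;> ring

theorem congruent_scale_snd (a c d : R) {u : R} (hu : IsUnit u) :
    !![a, c; c, d].Congruent !![a, u * c; u * c, u ^ 2 * d] :=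
  .of_isUnit_det (U := !![1, 0; 0, u]) (by simpa [det_fin_two_of]) <| by
    ext i j
    fin_cases i <;> fin_cases j <;> simp [mul_apply, Fin.sum_univ_two] <;> ring

theorem congruent_two_mul_sq {c : R} (hc : IsUnit c) :
    !![2, c; c, 2 * c ^ 2].Congruent !![2, 1; 1, 2] := by
  obtain ⟨u, hu⟩ := hc.exists_left_inv
  have h := congruent_scale_snd 2 c (2 * c ^ 2) (.of_mul_eq_one _ hu)
  rwa [hu, show u ^ 2 * (2 * c ^ 2) = 2 * (u * c) ^ 2 by ring, hu, one_pow, mul_one] at h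

end FinTwo

end Matrix

namespace PadicInt

theorem exists_quadratic_root_of_norm_lt_sq {p : ℕ} [Fact p.Prime] (q r s : ℤ_[p])
    (h : ‖s‖ < ‖r‖ ^ 2) :
    ∃ z : ℤ_[p], q * z ^ 2 + r * z + s = 0 := by
  open Polynomial in
  obtain ⟨z, hz, -⟩ := hensels_lemma (F := C q * X ^ 2 + C r * X + C s) (a := 0)
    (by convert h using 3 <;> simp)
  exact ⟨z, by simpa using hz⟩

theorem norm_two : ‖(2 : ℤ_[2])‖ = 2⁻¹ := by
  exact_mod_cast norm_p (p := 2)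

theorem isUnit_add_two_mul {c : ℤ_[2]} (hc : IsUnit c) (w : ℤ_[2]) : IsUnit (c + 2 * w) := by
  by_contra h
  have h2 : -(2 * w) ∈ nonunits ℤ_[2] := by
    rw [mem_nonunits, norm_neg, norm_mul, norm_two]
    nlinarith [norm_le_one w]
  exact IsLocalRing.nonunits_add h h2 (by simpa using hc)

theorem exists_quadratic_root_of_eight_dvd (q : ℤ_[2]) {c s : ℤ_[2]} (hc : IsUnit c)
    (hs : 8 ∣ s) :
    ∃ z : ℤ_[2], q * z ^ 2 + 2 * c * z + s = 0 := by
  apply exists_quadratic_root_of_norm_lt_sq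
  obtain ⟨k, rfl⟩ := hs
  rw [show (8 : ℤ_[2]) = 2 ^ 3 by norm_num, norm_mul, norm_mul, norm_pow, norm_two,
    isUnit_iff.mp hc]
  nlinarith [norm_le_one k]

theorem congruent_two_one_one_two_of_fst_eq_two (v d : ℤ_[2]) (hd : 8 ∣ d - 2) :
    !![2, 1 + 2 * v; 1 + 2 * v, d].Congruent !![2, 1; 1, 2] := by
  set c := 1 + 2 * v
  have hc : IsUnit c := isUnit_add_two_mul isUnit_one v
  have hdc : 8 ∣ d - 2 * c ^ 2 := by
    obtain ⟨k, hk⟩ := hd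
    exact ⟨k - v - v ^ 2, by linear_combination hk⟩
  have isUnit_three : IsUnit (3 : ℤ_[2]) := by
    convert isUnit_add_two_mul isUnit_one (1 : ℤ_[2]) using 1
    norm_num
  obtain ⟨s, hs⟩ := exists_quadratic_root_of_eight_dvd (-6) (hc.neg.mul isUnit_three) hdc
  have h := congruent_lower_shear 2 c d s
  rw [show d + 2 * s * c + 2 * s ^ 2 = 2 * (c + 2 * s) ^ 2 by linear_combination hs] at h
  exact h.trans_s11 (congruent_two_mul_sq (isUnit_add_two_mul hc s))

theorem congruent_two_one_one_two_s11 (a w d : ℤ_[2]) (ha : 8 ∣ a - 2) (hd : 8 ∣ d - 2) :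
    !![a, 1 + 2 * w; 1 + 2 * w, d].Congruent !![2, 1; 1, 2] := by
  obtain ⟨t, ht⟩ := exists_quadratic_root_of_eight_dvd d (isUnit_add_two_mul isUnit_one w) ha
  obtain ⟨k, hk⟩ := hd
  have h := congruent_upper_shear a (1 + 2 * w) d t
  rw [show a + 2 * t * (1 + 2 * w) + t ^ 2 * d = 2 by linear_combination ht,
    show 1 + 2 * w + t * d = 1 + 2 * (w + t + 4 * t * k) by linear_combination t * hk] at h
  exact h.trans_s11 (congruent_two_one_one_two_of_fst_eq_two _ d ⟨k, hk⟩)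

end PadicInt

open PadicInt in
/-- For all `b₁, b₂, ξ ∈ ℤ_2`, the matrix `[[2+8b₁, 1+8ξ],[1+8ξ, 2+8b₂]]` is
congruent under `GL_2(ℤ_2)` to `[[2,1],[1,2]]`. -/
theorem stmt_11 (b₁ b₂ ξ : ℤ_[2]) :
    (!![2 + 8 * b₁, 1 + 8 * ξ; 1 + 8 * ξ, 2 + 8 * b₂] : Matrix (Fin 2) (Fin 2) ℤ_[2]).Congruent
      !![2, 1; 1, 2] := by
  have h := congruent_two_one_one_two_s11 (2 + 8 * b₁) (4 * ξ) (2 + 8 * b₂) ⟨b₁, by ring⟩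
    ⟨b₂, by ring⟩
  rwa [show 1 + 2 * (4 * ξ) = 1 + 8 * ξ by ring] at h
end

section
/- Let M ∈ Sym_n(ℤ) be nonsingular and let P = {p₁, …, p_l} be a nonempty finite set of primes. For each pᵢ ∈ P set e_{pᵢ} = Dep_{pᵢ}(Cok(M)_{pᵢ}) + 3 if pᵢ = 2 and e_{pᵢ} = Dep_{pᵢ}(Cok(M)_{pᵢ}) + 1 if pᵢ is odd, and let a = p₁^{e_{p₁}} ⋯ p_l^{e_{p_l}}. Then for every ΔM ∈ Sym_n(ℤ) all of whose entries are divisible by a, the matrix M + ΔM is nonsingular and for every p ∈ P the paired cokernels (Cok(M + ΔM)_p,⟨·,·⟩_p) and (Cok(M)_p,⟨·,·⟩_p) are isomorphic. -/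
open Matrix MeasureTheory

/-! Let `B` be an integral matrix with `M B = p^d` (it exists because `p^d` kills `Cok M`).
A symmetric perturbation `M + F` with `F ≡ 0 mod p^(d + 2v + c)`, where `v` is the valuation
of `2` and `c ≥ 1`, is congruent over `ℤ_p`, via `1 - ½ F (M + F)⁻¹`, to a perturbation that
vanishes modulo `p^(d + 2v + 2c)`: a Newton step for the equation `U (M + F) Uᵀ = M`. After `d`
steps, `M + ΔM` is congruent to `M + p^(2d+1) G = M (1 + p^(d+1) B G)`. The factor
`1 + p^(d+1) B G` is a unit, so `M + p^(2d+1) G` has the same cokernel as `M`, and its inverse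
differs from `M⁻¹ = p^(-d) B` by an integral matrix, so the two pairings agree modulo `ℤ_p`. -/

open IsLocalRing

namespace Matrix

variable {R : Type*} [CommRing R] {ι : Type*}

theorem transpose_eq_of_transpose_add_smul [IsDomain R] {M F : Matrix ι ι R} {s : R}
    (hs : s ≠ 0) (hM : Mᵀ = M) (h : (M + s • F)ᵀ = M + s • F) : Fᵀ = F := by
  rw [transpose_add, hM, transpose_smul, add_right_inj] at h
  ext i j
  exact mul_left_cancel₀ hs (congrFun₂ h i j)

theorem exists_map_eq_smul_of_dvd {S m n : Type*} [CommRing S] (f : R →+* S) {E : Matrix m n R}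
    {a : R} (h : ∀ i j, a ∣ E i j) : ∃ F : Matrix m n S, E.map f = f a • F := by
  choose q hq using h
  exact ⟨(of q).map f, by ext i j; simp [hq i j]⟩

theorem det_ne_zero_of_mul_eq_smul_one [IsDomain R] [Fintype ι] [DecidableEq ι]
    {A B : Matrix ι ι R} {s : R} (hs : s ≠ 0) (h : B * A = s • 1) : A.det ≠ 0 := by
  intro hA
  have := congrArg det h
  rw [det_mul, hA, mul_zero, det_smul, det_one, mul_one] at this
  exact pow_ne_zero _ hs this.symm

variable [Fintype ι] [DecidableEq ι]

theorem IsSymm.mul_eq_smul_one_comm [IsDomain R] {A B : Matrix ι ι R} {s : R} (hA : A.IsSymm)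
    (hs : s ≠ 0) (h : A * B = s • 1) : B * A = s • 1 := by
  have hBt : Bᵀ * A = s • 1 := by
    rw [← hA.eq, ← transpose_mul, h, transpose_smul, transpose_one]
  have hB : Bᵀ = B := smul_right_injective _ hs <| by
    calc s • Bᵀ = Bᵀ * (A * B) := by rw [h, Matrix.mul_smul, Matrix.mul_one]
      _ = s • B := by rw [← Matrix.mul_assoc, hBt, Matrix.smul_mul, Matrix.one_mul]
  rwa [hB] at hBt

theorem exists_mul_eq_smul_one_of_exponent {A : Matrix ι ι R} {k : ℕ}
    (hk : AddMonoid.exponent A.Cok = k) : ∃ B : Matrix ι ι R, A * B = (k : R) • 1 := by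
  have hrange : ∀ x : ι → R, (k : R) • x ∈ LinearMap.range A.mulVecLin := by
    intro x
    rw [← Submodule.Quotient.mk_eq_zero, Submodule.Quotient.mk_smul, Nat.cast_smul_eq_nsmul,
      ← hk]
    exact AddMonoid.exponent_nsmul_eq_zero _
  choose u hu using fun j => hrange (Pi.single j 1)
  refine ⟨of fun i j => u j i, ?_⟩
  ext i j
  exact (congrFun (hu j) i).trans (by simp [one_apply, Pi.single_apply])

theorem isUnit_one_add_smul_of_mem_maximalIdeal [IsLocalRing R] {t : R}
    (ht : t ∈ maximalIdeal R) (A : Matrix ι ι R) : IsUnit (1 + t • A) := by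
  rw [isUnit_iff_isUnit_det, ← residue_ne_zero_iff_isUnit, RingHom.map_det]
  have : (residue R).mapMatrix (1 + t • A) = 1 := by
    ext i j
    simp [one_apply, apply_ite, (residue_eq_zero_iff t).2 ht]
  simp [this]

/-- With `B * N = s • 1` standing for `s • N⁻¹` and `N = M + (2 * t * s) • F`, this is a
Newton step for `U * N * Uᵀ = M`: the error `(2 * t * s) • F` becomes
`(t ^ 2 * s) • (F * Bᵀ * F)`. -/
theorem one_sub_smul_mul_mul_transpose {N F B : Matrix ι ι R} {s : R} (t : R) (hN : Nᵀ = N)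
    (hF : Fᵀ = F) (hB : B * N = s • 1) :
    (1 - t • (F * B)) * N * (1 - t • (F * B))ᵀ
      = N - (2 * t * s) • F + (t ^ 2 * s) • (F * Bᵀ * F) := by
  have hNB : N * Bᵀ = s • 1 := by
    rw [← hN, ← transpose_mul, hB, transpose_smul, transpose_one]
  rw [transpose_sub, transpose_one, transpose_smul, transpose_mul, hF]
  simp only [Matrix.sub_mul, Matrix.mul_sub, Matrix.one_mul, Matrix.mul_one, Matrix.smul_mul,
    Matrix.mul_smul, Matrix.mul_assoc, hB]
  rw [← Matrix.mul_assoc N, hNB, Matrix.smul_mul, Matrix.one_mul]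
  module

section Hensel

variable {M B : Matrix ι ι R} {π : R} {d : ℕ}

theorem mul_one_add_pow_smul (hMB : M * B = π ^ d • 1) (k : ℕ) (F : Matrix ι ι R) :
    M * (1 + π ^ k • (B * F)) = M + π ^ (d + k) • F := by
  rw [Matrix.mul_add, Matrix.mul_one, Matrix.mul_smul, ← Matrix.mul_assoc, hMB, Matrix.smul_mul,
    Matrix.one_mul, smul_smul, ← pow_add, add_comm k]

theorem exists_mul_add_pow_smul_eq [IsLocalRing R] (hπ : π ∈ maximalIdeal R)
    (hMB : M * B = π ^ d • 1) (hBM : B * M = π ^ d • 1) {e : ℕ} (he : d < e)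
    (F : Matrix ι ι R) : ∃ B', B' * (M + π ^ e • F) = π ^ d • 1 := by
  obtain ⟨k, rfl⟩ := Nat.exists_eq_add_of_lt he
  have hS := isUnit_one_add_smul_of_mem_maximalIdeal
    (Ideal.pow_mem_of_mem _ hπ (k + 1) k.succ_pos) (B * F)
  refine ⟨(1 + π ^ (k + 1) • (B * F))⁻¹ * B, ?_⟩
  rw [add_assoc, ← mul_one_add_pow_smul hMB, ← Matrix.mul_assoc, Matrix.mul_assoc _ B, hBM,
    Matrix.mul_smul, Matrix.mul_one, Matrix.smul_mul, nonsing_inv_mul _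
      ((isUnit_iff_isUnit_det _).1 hS)]

variable {w : R} {v : ℕ}

theorem exists_isUnit_mul_mul_transpose_eq_two_mul [IsDomain R] [IsLocalRing R]
    (hπ : π ∈ maximalIdeal R) (hπ0 : π ≠ 0) (hM : Mᵀ = M) (hMB : M * B = π ^ d • 1)
    (hBM : B * M = π ^ d • 1) (hw : 2 * w = π ^ v) {c : ℕ} (hc : 1 ≤ c) {F : Matrix ι ι R}
    (hF : Fᵀ = F) :
    ∃ U G : Matrix ι ι R, IsUnit U ∧ Gᵀ = G ∧
      U * (M + π ^ (d + 2 * v + c) • F) * Uᵀ = M + π ^ (d + 2 * v + 2 * c) • G := by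
  set N := M + π ^ (d + 2 * v + c) • F
  have hNt : Nᵀ = N := by rw [transpose_add, hM, transpose_smul, hF]
  have hNM : N - π ^ (d + 2 * v + c) • F = M := add_sub_cancel_right _ _
  obtain ⟨B', hB'⟩ := exists_mul_add_pow_smul_eq hπ hMB hBM (by omega : d < d + 2 * v + c) F
  set t := w * π ^ (v + c)
  have ht : -t ∈ maximalIdeal R :=
    neg_mem (Ideal.mul_mem_left _ _ (Ideal.pow_mem_of_mem _ hπ _ (by omega)))
  have h2t : 2 * t * π ^ d = π ^ (d + 2 * v + c) := by
    linear_combination (π ^ (v + c) * π ^ d) * hw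
  have ht2 : t ^ 2 * π ^ d = π ^ (d + 2 * v + 2 * c) * w ^ 2 := by ring
  have hcongr := one_sub_smul_mul_mul_transpose t hNt hF hB'
  rw [h2t, hNM, ht2, ← smul_smul (π ^ (d + 2 * v + 2 * c))] at hcongr
  refine ⟨_, _, ?_,
    transpose_eq_of_transpose_add_smul (pow_ne_zero (d + 2 * v + 2 * c) hπ0) hM ?_, hcongr⟩
  · simpa [sub_eq_add_neg, neg_smul] using isUnit_one_add_smul_of_mem_maximalIdeal ht (F * B')
  · rw [← hcongr, transpose_mul, transpose_mul, transpose_transpose, hNt, Matrix.mul_assoc]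

theorem exists_isUnit_mul_mul_transpose_eq [IsDomain R] [IsLocalRing R]
    (hπ : π ∈ maximalIdeal R) (hπ0 : π ≠ 0) (hM : Mᵀ = M) (hMB : M * B = π ^ d • 1)
    (hBM : B * M = π ^ d • 1) (hw : 2 * w = π ^ v) (t : ℕ) :
    ∀ {c : ℕ}, 1 ≤ c → ∀ {F : Matrix ι ι R}, Fᵀ = F →
    ∃ U G : Matrix ι ι R, IsUnit U ∧
      U * (M + π ^ (d + 2 * v + c) • F) * Uᵀ = M + π ^ (d + 2 * v + c + t) • G := by
  induction t with
  | zero => exact fun _ F _ => ⟨1, F, isUnit_one, by simp⟩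
  | succ t ih =>
    intro c hc F hF
    obtain ⟨U₁, G₁, hU₁, hG₁, h₁⟩ :=
      exists_isUnit_mul_mul_transpose_eq_two_mul hπ hπ0 hM hMB hBM hw hc hF
    obtain ⟨U₂, G₂, hU₂, h₂⟩ := ih (by omega : 1 ≤ 2 * c) hG₁
    refine ⟨U₂ * U₁, π ^ (c - 1) • G₂, hU₂.mul hU₁, ?_⟩
    calc U₂ * U₁ * (M + π ^ (d + 2 * v + c) • F) * (U₂ * U₁)ᵀ
        = U₂ * (U₁ * (M + π ^ (d + 2 * v + c) • F) * U₁ᵀ) * U₂ᵀ := by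
          simp only [transpose_mul, Matrix.mul_assoc]
      _ = M + π ^ (d + 2 * v + c + (t + 1)) • π ^ (c - 1) • G₂ := by
          rw [h₁, h₂, smul_smul, ← pow_add]
          congr 3
          omega

end Hensel

theorem range_mulVecLin_mul_of_isUnit (A : Matrix ι ι R) {V : Matrix ι ι R} (hV : IsUnit V) :
    LinearMap.range (A * V).mulVecLin = LinearMap.range A.mulVecLin := by
  rw [mulVecLin_mul, LinearMap.range_comp_of_range_eq_top]
  exact LinearMap.range_eq_top.2 (mulVec_surjective_iff_isUnit.2 hV)

theorem dvd_dotProduct_mulVec_sub {M B : Matrix ι ι R} {s : R} (hM : Mᵀ = M)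
    (hMB : M * B = s • 1) (hBM : B * M = s • 1) {x x' y y' a b : ι → R}
    (ha : M *ᵥ a = x - x') (hb : M *ᵥ b = y - y') :
    s ∣ x ⬝ᵥ B *ᵥ y - x' ⬝ᵥ B *ᵥ y' := by
  have hsplit : x ⬝ᵥ B *ᵥ y - x' ⬝ᵥ B *ᵥ y'
      = x ⬝ᵥ B *ᵥ (M *ᵥ b) + (M *ᵥ a) ⬝ᵥ B *ᵥ y' := by
    rw [ha, hb, mulVec_sub, dotProduct_sub, sub_dotProduct]
    ring
  have hMa : (M *ᵥ a) ⬝ᵥ B *ᵥ y' = s * (a ⬝ᵥ y') := by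
    rw [dotProduct_comm, dotProduct_mulVec, vecMul_mulVec, ← mulVec_transpose, transpose_mul, hM,
      transpose_transpose, hMB, smul_mulVec, one_mulVec, smul_dotProduct, smul_eq_mul,
      dotProduct_comm]
  rw [hsplit, mulVec_mulVec, hBM, hMa, smul_mulVec, one_mulVec, dotProduct_smul, smul_eq_mul]
  exact dvd_add (dvd_mul_right _ _) (dvd_mul_right _ _)

section Congruence

variable {N M B U S : Matrix ι ι R}

theorem mul_eq_smul_one_of_mul_mul_transpose_eq {s : R} (hU : IsUnit U) (hS : IsUnit S)
    (h : U * N * Uᵀ = M * S) (hMB : M * B = s • 1) :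
    N * (Uᵀ * (S⁻¹ * B) * U) = s • 1 := by
  have hNU : N * Uᵀ = U⁻¹ * (M * S) := by
    rw [← h, Matrix.mul_assoc, nonsing_inv_mul_cancel_left _ _ ((isUnit_iff_isUnit_det U).1 hU)]
  rw [← Matrix.mul_assoc, ← Matrix.mul_assoc, hNU, Matrix.mul_assoc U⁻¹, Matrix.mul_assoc M,
    mul_nonsing_inv_cancel_left _ _ ((isUnit_iff_isUnit_det S).1 hS), hMB, Matrix.mul_smul,
    Matrix.mul_one, Matrix.smul_mul, nonsing_inv_mul _ ((isUnit_iff_isUnit_det U).1 hU)]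

theorem map_range_mulVecLin_of_mul_mul_transpose_eq (hU : IsUnit U) (hS : IsUnit S)
    (h : U * N * Uᵀ = M * S) :
    (LinearMap.range N.mulVecLin).map U.mulVecLin = LinearMap.range M.mulVecLin := by
  have hUN : U * N = M * (S * Uᵀ⁻¹) := by
    rw [← Matrix.mul_assoc, ← h, mul_nonsing_inv_cancel_right _ _
      ((isUnit_iff_isUnit_det _).1 ((isUnit_transpose U).2 hU))]
  rw [← LinearMap.range_comp, ← mulVecLin_mul, hUN, range_mulVecLin_mul_of_isUnit _
    (hS.mul (isUnit_nonsing_inv_iff.2 ((isUnit_transpose U).2 hU)))]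

end Congruence
end Matrix

section Padic

variable {p : ℕ} [Fact p.Prime] {ι : Type*} [Fintype ι] [DecidableEq ι]

theorem PadicInt.exists_two_mul_eq_pow :
    ∃ w : ℤ_[p], 2 * w = (p : ℤ_[p]) ^ (if p = 2 then 1 else 0) := by
  by_cases hp2 : p = 2
  · subst hp2
    exact ⟨1, by norm_num⟩
  · have hunit : IsUnit (2 : ℤ_[p]) := by
      rw [PadicInt.isUnit_iff, ← Nat.cast_ofNat, PadicInt.norm_natCast_eq_one_iff,
        Nat.coprime_primes Fact.out Nat.prime_two]
      exact hp2
    exact ⟨↑hunit.unit⁻¹, by simp [hp2]⟩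

theorem pairVal_eq_of_mul_eq_pow_smul_one {A B : Matrix ι ι ℤ_[p]} {d : ℕ}
    (h : A * B = (p : ℤ_[p]) ^ d • 1) (X Y : ι → ℤ_[p]) :
    pairVal A X Y = ((p : ℚ_[p]) ^ d)⁻¹ * ((X ⬝ᵥ B *ᵥ Y : ℤ_[p]) : ℚ_[p]) := by
  let φ := PadicInt.Coe.ringHom (p := p)
  have hpd : (p : ℚ_[p]) ^ d ≠ 0 :=
    pow_ne_zero _ (Nat.cast_ne_zero.2 (Fact.out : p.Prime).ne_zero)
  have hinv : (A.map φ)⁻¹ = ((p : ℚ_[p]) ^ d)⁻¹ • B.map φ := by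
    refine Matrix.inv_eq_right_inv ?_
    rw [Matrix.mul_smul, ← Matrix.map_mul, h]
    ext i j
    simp [Matrix.one_apply, apply_ite, hpd]
  change (φ ∘ X) ⬝ᵥ (A.map φ)⁻¹ *ᵥ (φ ∘ Y) = _ * φ (X ⬝ᵥ B *ᵥ Y)
  rw [hinv, Matrix.smul_mulVec, dotProduct_smul, smul_eq_mul, RingHom.map_dotProduct]
  congr 2
  ext i
  exact (RingHom.map_mulVec φ B Y i).symm

theorem norm_pairVal_sub_le_one {κ : Type*} [Fintype κ] [DecidableEq κ]
    {A B : Matrix ι ι ℤ_[p]} {A' B' : Matrix κ κ ℤ_[p]} {d : ℕ}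
    (hA : A * B = (p : ℤ_[p]) ^ d • 1)
    (hA' : A' * B' = (p : ℤ_[p]) ^ d • 1) {X Y : ι → ℤ_[p]} {X' Y' : κ → ℤ_[p]}
    (h : (p : ℤ_[p]) ^ d ∣ X ⬝ᵥ B *ᵥ Y - X' ⬝ᵥ B' *ᵥ Y') :
    ‖pairVal A X Y - pairVal A' X' Y'‖ ≤ 1 := by
  obtain ⟨z, hz⟩ := h
  have hpd : (p : ℚ_[p]) ^ d ≠ 0 :=
    pow_ne_zero _ (Nat.cast_ne_zero.2 (Fact.out : p.Prime).ne_zero)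
  rw [pairVal_eq_of_mul_eq_pow_smul_one hA, pairVal_eq_of_mul_eq_pow_smul_one hA', ← mul_sub,
    ← PadicInt.coe_sub, hz, PadicInt.coe_mul, PadicInt.coe_pow, PadicInt.coe_natCast,
    inv_mul_cancel_left₀ hpd, ← PadicInt.norm_def]
  exact PadicInt.norm_le_one z

theorem pairedIso_of_mul_mul_transpose_eq {N M B U S T : Matrix ι ι ℤ_[p]} {d : ℕ}
    (hM : Mᵀ = M) (hMB : M * B = (p : ℤ_[p]) ^ d • 1) (hBM : B * M = (p : ℤ_[p]) ^ d • 1)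
    (hU : IsUnit U) (hS : IsUnit S) (h : U * N * Uᵀ = M * S)
    (hST : (S - 1) * B = (p : ℤ_[p]) ^ d • T) : PairedIso N M := by
  refine ⟨(Submodule.Quotient.equiv _ _ (GeneralLinearGroup.toLin hU.unit).toLinearEquiv
    (map_range_mulVecLin_of_mul_mul_transpose_eq hU hS h)).toAddEquiv,
    fun X Y X' Y' hX hY => ?_⟩
  obtain ⟨a, ha⟩ := (Submodule.Quotient.eq _).1 hX
  obtain ⟨b, hb⟩ := (Submodule.Quotient.eq _).1 hY
  refine norm_pairVal_sub_le_one (mul_eq_smul_one_of_mul_mul_transpose_eq hU hS h hMB) hMB ?_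
  have hmove : X ⬝ᵥ (Uᵀ * (S⁻¹ * B) * U) *ᵥ Y
      = (U *ᵥ X) ⬝ᵥ (S⁻¹ * B) *ᵥ (U *ᵥ Y) := by
    rw [← mulVec_mulVec, ← mulVec_mulVec, dotProduct_mulVec, vecMul_transpose]
  have hSB : S⁻¹ * B - B = (p : ℤ_[p]) ^ d • -(S⁻¹ * T) := by
    rw [smul_neg, ← Matrix.mul_smul, ← hST, ← Matrix.mul_assoc, Matrix.mul_sub,
      nonsing_inv_mul _ ((isUnit_iff_isUnit_det S).1 hS), Matrix.mul_one, Matrix.sub_mul,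
      Matrix.one_mul, neg_sub]
  rw [hmove, ← sub_add_sub_cancel _ ((U *ᵥ X) ⬝ᵥ B *ᵥ (U *ᵥ Y))]
  refine dvd_add ?_ (dvd_dotProduct_mulVec_sub hM hMB hBM ha hb)
  rw [← dotProduct_sub, ← sub_mulVec, hSB, smul_mulVec, dotProduct_smul, smul_eq_mul]
  exact dvd_mul_right _ _

theorem det_ne_zero_and_pairedIso_add_of_pow_dvd {M E : Matrix ι ι ℤ} (hM : M.IsSymm)
    (hE : E.IsSymm) {d : ℕ}
    (hd : AddMonoid.exponent (M.map (Int.cast : ℤ → ℤ_[p])).Cok = p ^ d)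
    {v : ℕ} (hv : ∃ w : ℤ_[p], 2 * w = (p : ℤ_[p]) ^ v)
    (hdvd : ∀ i j, (p : ℤ) ^ (d + 2 * v + 1) ∣ E i j) :
    (M + E).det ≠ 0 ∧
      PairedIso ((M + E).map (Int.cast : ℤ → ℤ_[p]))
        (M.map (Int.cast : ℤ → ℤ_[p])) := by
  have hp : (p : ℤ_[p]) ∈ maximalIdeal ℤ_[p] := by
    rw [PadicInt.maximalIdeal_eq_span_p]; exact Ideal.mem_span_singleton_self _
  have hp0 : (p : ℤ_[p]) ≠ 0 := Nat.cast_ne_zero.2 (Fact.out : p.Prime).ne_zero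
  have hMp : (M.map (Int.cast : ℤ → ℤ_[p])).IsSymm := hM.map _
  obtain ⟨B, hMB⟩ := exists_mul_eq_smul_one_of_exponent hd
  rw [Nat.cast_pow] at hMB
  have hBM := hMp.mul_eq_smul_one_comm (pow_ne_zero d hp0) hMB
  obtain ⟨F, hF⟩ := exists_map_eq_smul_of_dvd (Int.castRingHom ℤ_[p]) hdvd
  rw [map_pow, map_natCast, Int.coe_castRingHom] at hF
  have hN : (M + E).map (Int.cast : ℤ → ℤ_[p])
      = M.map Int.cast + (p : ℤ_[p]) ^ (d + 2 * v + 1) • F := by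
    rw [Matrix.map_add _ Int.cast_add, hF]
  have hFt : Fᵀ = F := transpose_eq_of_transpose_add_smul (pow_ne_zero _ hp0) hMp.eq
    (by rw [← hN, ← transpose_map, (hM.add hE).eq])
  constructor
  · obtain ⟨B', hB'⟩ := exists_mul_add_pow_smul_eq hp hMB hBM (by omega : d < d + 2 * v + 1) F
    rw [← hN] at hB'
    intro hdet
    refine det_ne_zero_of_mul_eq_smul_one (pow_ne_zero d hp0) hB' ?_
    exact (RingHom.map_det (Int.castRingHom ℤ_[p]) (M + E)).symm.trans (by rw [hdet, map_zero])
  obtain ⟨w, hw⟩ := hv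
  obtain ⟨U, G, hU, hUG⟩ :=
    exists_isUnit_mul_mul_transpose_eq hp hp0 hMp.eq hMB hBM hw d le_rfl hFt
  have hS := isUnit_one_add_smul_of_mem_maximalIdeal
    (Ideal.pow_mem_of_mem _ hp (d + 2 * v + 1) (by omega)) (B * G)
  refine pairedIso_of_mul_mul_transpose_eq hMp.eq hMB hBM hU hS ?_
    (T := (p : ℤ_[p]) ^ (2 * v + 1) • (B * G * B)) ?_
  · rw [hN, hUG, mul_one_add_pow_smul hMB, Nat.add_comm d (d + 2 * v + 1)]
  · rw [add_sub_cancel_left, Matrix.smul_mul, smul_smul, ← pow_add, ← add_assoc]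

end Padic

theorem stmt_14_general {n : ℕ} (M : Matrix (Fin n) (Fin n) ℤ)
    (hMs : M.IsSymm)
    (P : Finset ℕ) (hP : P.Nonempty) (hprime : ∀ p ∈ P, p.Prime)
    (d : ℕ → ℕ)
    (hd : ∀ (p : ℕ) [Fact p.Prime], p ∈ P →
      AddMonoid.exponent (M.map (Int.cast : ℤ → ℤ_[p])).Cok = p ^ d p)
    (a : ℕ) (ha : a = ∏ p ∈ P, p ^ (if p = 2 then d p + 3 else d p + 1))
    (ΔM : Matrix (Fin n) (Fin n) ℤ) (hΔs : ΔM.IsSymm)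
    (hΔ : ∀ i j, (a : ℤ) ∣ ΔM i j) :
    (M + ΔM).det ≠ 0 ∧
    ∀ (p : ℕ) [Fact p.Prime], p ∈ P →
      PairedIso ((M + ΔM).map (Int.cast : ℤ → ℤ_[p])) (M.map (Int.cast : ℤ → ℤ_[p])) := by
  have hdvd : ∀ p ∈ P, ∀ i j,
      (p : ℤ) ^ (d p + 2 * (if p = 2 then 1 else 0) + 1) ∣ ΔM i j := by
    intro p hp i j
    have he : d p + 2 * (if p = 2 then 1 else 0) + 1 = if p = 2 then d p + 3 else d p + 1 := by
      split_ifs <;> rfl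
    rw [he]
    exact_mod_cast (ha ▸ Finset.dvd_prod_of_mem _ hp : _ ∣ a).natCast.trans (hΔ i j)
  have hprimewise (p : ℕ) [Fact p.Prime] (hp : p ∈ P) :=
    det_ne_zero_and_pairedIso_add_of_pow_dvd hMs hΔs (hd p hp) PadicInt.exists_two_mul_eq_pow
      (hdvd p hp)
  obtain ⟨p₀, hp₀⟩ := hP
  have : Fact p₀.Prime := ⟨hprime p₀ hp₀⟩
  exact ⟨(hprimewise p₀ hp₀).1, fun p _ hp => (hprimewise p hp).2⟩

/-- Let `M ∈ Sym_n(ℤ)` be nonsingular and `P` a nonempty finite set of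
primes. For `p ∈ P` let `d p = Dep_p(Cok(M)_p)` (i.e. the exponent of `Cok(M)_p` is `p^(d p)`),
set `e_p = d p + 3` if `p = 2` and `d p + 1` otherwise, and `a = ∏_{p ∈ P} p^{e_p}`. Then for
every symmetric `ΔM` all of whose entries are divisible by `a`, the matrix `M + ΔM` is
nonsingular and for every `p ∈ P` its paired cokernel at `p` is isomorphic to that of `M`. -/
theorem stmt_14 {n : ℕ} (hn : 1 ≤ n) (M : Matrix (Fin n) (Fin n) ℤ)
    (hMs : M.IsSymm) (hMd : M.det ≠ 0)
    (P : Finset ℕ) (hP : P.Nonempty) (hprime : ∀ p ∈ P, p.Prime)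
    (d : ℕ → ℕ)
    (hd : ∀ (p : ℕ) [Fact p.Prime], p ∈ P →
      AddMonoid.exponent (M.map (Int.cast : ℤ → ℤ_[p])).Cok = p ^ d p)
    (a : ℕ) (ha : a = ∏ p ∈ P, p ^ (if p = 2 then d p + 3 else d p + 1))
    (ΔM : Matrix (Fin n) (Fin n) ℤ) (hΔs : ΔM.IsSymm)
    (hΔ : ∀ i j, (a : ℤ) ∣ ΔM i j) :
    (M + ΔM).det ≠ 0 ∧
    ∀ (p : ℕ) [Fact p.Prime], p ∈ P →
      PairedIso ((M + ΔM).map (Int.cast : ℤ → ℤ_[p])) (M.map (Int.cast : ℤ → ℤ_[p])) :=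
  stmt_14_general M hMs P hP hprime d hd a ha ΔM hΔs hΔ
end
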